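/- arXiv:1008.3919 — 9 statements merged into one kernel-verified Lean document; each statement's English description precedes it below -/
import Mathlib

section
/- If T̂ is the transfer operator of a conservative ergodic measure preserving transformation and g : X → [0,∞) is measurable and subinvariant, i.e. T̂ g ≤ g a.e., then g is constant a.e. -/
/-!
Hopf's argument turns subinvariance into invariance: if `P h ≤ h` with `h` finite, the defect
`d = h - P h` satisfies `∑ₖ ∫_{T⁻ᵏ s} d ≤ ∫_s h` by telescoping the duality, while conservativity
makes the left-hand side at least `∞ · ∫_s d`; hence `d = 0` a.e.

For a finite level `c`, the truncation `min g c` is finite and subinvariant, hence invariant, so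
the excess `g - c` is subinvariant, and so is the indicator of its support `{c < g}`, the monotone
limit of `min (n (g - c)) 1`. A set whose indicator is subinvariant is a.e. forward invariant;
by Hopf its indicator is invariant, so the indicator of the complement is subinvariant as well,
and the set is a.e. invariant. Ergodicity then makes every level set `{c < g}` null or conull.
-/

open MeasureTheory Filter ENNReal Set Function

section

variable {X : Type*} [MeasurableSpace X] {μ : Measure X} {T : X → X}

theorem ENNReal.iSup_min_natCast_mul_one (a : ℝ≥0∞) :
    ⨆ n : ℕ, min ((n : ℝ≥0∞) * a) 1 = if a = 0 then 0 else 1 := by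
  split_ifs with ha
  · simp [ha]
  · refine le_antisymm (iSup_le fun n => min_le_right _ _) ?_
    obtain ⟨n, hn⟩ := ENNReal.exists_nat_mul_gt ha one_ne_top
    exact le_iSup_of_le n (le_min hn.le le_rfl)

namespace MeasureTheory

theorem Conservative.tsum_setLIntegral_inter_preimage_iterate (hc : Conservative T μ)
    {s : Set X} (hs : MeasurableSet s) {d : X → ℝ≥0∞} (hd : Measurable d) :
    ∑' k, ∫⁻ x in s ∩ T^[k] ⁻¹' s, d x ∂μ = ∞ * ∫⁻ x in s, d x ∂μ := by
  have hTk : ∀ k, MeasurableSet (T^[k] ⁻¹' s) := fun k => (hc.measurable.iterate k) hs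
  have returns : ∀ᵐ x ∂μ.restrict s, ∑' k, (T^[k] ⁻¹' s).indicator d x = ∞ * d x := by
    filter_upwards [ae_restrict_mem hs,
      ae_restrict_of_ae (hc.ae_mem_imp_frequently_image_mem hs.nullMeasurableSet)] with x hx hfreq
    have hinf : {k | T^[k] x ∈ s}.Infinite := Nat.frequently_atTop_iff_infinite.1 (hfreq hx)
    calc ∑' k, (T^[k] ⁻¹' s).indicator d x
        = ∑' k, {k | T^[k] x ∈ s}.indicator (fun _ => d x) k := rfl
      _ = ∞ * d x := by
          rw [← tsum_subtype {k | T^[k] x ∈ s} (fun _ => d x), ENNReal.tsum_set_const,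
            hinf.encard_eq, ENat.toENNReal_top]
  calc ∑' k, ∫⁻ x in s ∩ T^[k] ⁻¹' s, d x ∂μ
      = ∑' k, ∫⁻ x in s, (T^[k] ⁻¹' s).indicator d x ∂μ := by
        congr 1 with k
        rw [lintegral_indicator (hTk k), Measure.restrict_restrict (hTk k), inter_comm]
    _ = ∫⁻ x in s, ∞ * d x ∂μ := by
        rw [← lintegral_tsum fun k => (hd.indicator (hTk k)).aemeasurable]
        exact lintegral_congr_ae returns
    _ = ∞ * ∫⁻ x in s, d x ∂μ := lintegral_const_mul ∞ hd

end MeasureTheory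

structure IsTransferOperator (μ : Measure X) (T : X → X) (P : (X → ℝ≥0∞) → X → ℝ≥0∞) :
    Prop where
  measurable : ∀ f, Measurable f → Measurable (P f)
  lintegral_comp_mul : ∀ f g, Measurable f → Measurable g →
    ∫⁻ x, f (T x) * g x ∂μ = ∫⁻ x, f x * P g x ∂μ

namespace IsTransferOperator

variable {P : (X → ℝ≥0∞) → X → ℝ≥0∞} {u v : X → ℝ≥0∞} {s : Set X}

theorem setLIntegral_preimage (hP : IsTransferOperator μ T P) (hT : Measurable T)
    (hu : Measurable u) (hs : MeasurableSet s) :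
    ∫⁻ x in T ⁻¹' s, u x ∂μ = ∫⁻ x in s, P u x ∂μ := by
  have h := hP.lintegral_comp_mul (s.indicator 1) u (measurable_one.indicator hs) hu
  simp only [← indicator_comp_right, ← indicator_mul_left, Pi.one_comp, Pi.one_apply,
    one_mul] at h
  rwa [lintegral_indicator (hT hs), lintegral_indicator hs] at h

theorem ae_le_preimage_of_subinvariant_indicator (hP : IsTransferOperator μ T P)
    (hT : Measurable T) (hs : MeasurableSet s) (hsub : P (s.indicator 1) ≤ᵐ[μ] s.indicator 1) :
    s ≤ᵐ[μ] T ⁻¹' s := by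
  refine ae_le_set.2 (nonpos_iff_eq_zero.1 ?_)
  calc μ (s \ T ⁻¹' s)
      = ∫⁻ x in T ⁻¹' sᶜ, s.indicator 1 x ∂μ := by
        rw [lintegral_indicator_one hs, Measure.restrict_apply hs, preimage_compl, sdiff_eq]
    _ = ∫⁻ x in sᶜ, P (s.indicator 1) x ∂μ :=
        hP.setLIntegral_preimage hT (measurable_one.indicator hs) hs.compl
    _ ≤ ∫⁻ x in sᶜ, s.indicator 1 x ∂μ := lintegral_mono_ae (ae_restrict_of_ae hsub)
    _ = 0 := by rw [lintegral_indicator_one hs, Measure.restrict_apply hs, inter_compl_self,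
        measure_empty]

theorem setLIntegral_sub_add_setLIntegral_preimage (hP : IsTransferOperator μ T P)
    (hT : Measurable T) (hu : Measurable u) (hsub : P u ≤ᵐ[μ] u) (hs : MeasurableSet s) :
    ∫⁻ x in s, (u x - P u x) ∂μ + ∫⁻ x in T ⁻¹' s, u x ∂μ = ∫⁻ x in s, u x ∂μ := by
  have hd : Measurable fun x => u x - P u x := hu.sub (hP.measurable u hu)
  rw [hP.setLIntegral_preimage hT hu hs, ← lintegral_add_left hd]
  exact lintegral_congr_ae (ae_restrict_of_ae (hsub.mono fun x hx => tsub_add_cancel_of_le hx))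

theorem sum_setLIntegral_preimage_iterate_sub_add (hP : IsTransferOperator μ T P)
    (hT : Measurable T) (hu : Measurable u) (hsub : P u ≤ᵐ[μ] u) (hs : MeasurableSet s)
    (m : ℕ) :
    ∑ k ∈ Finset.range m, ∫⁻ x in T^[k] ⁻¹' s, (u x - P u x) ∂μ + ∫⁻ x in T^[m] ⁻¹' s, u x ∂μ =
      ∫⁻ x in s, u x ∂μ := by
  induction m with
  | zero => simp
  | succ m ih =>
    rw [Finset.sum_range_succ, add_assoc, iterate_succ, preimage_comp,
      hP.setLIntegral_sub_add_setLIntegral_preimage hT hu hsub ((hT.iterate m) hs), ih]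

theorem tsum_setLIntegral_preimage_iterate_sub_le (hP : IsTransferOperator μ T P)
    (hT : Measurable T) (hu : Measurable u) (hsub : P u ≤ᵐ[μ] u) (hs : MeasurableSet s) :
    ∑' k, ∫⁻ x in T^[k] ⁻¹' s, (u x - P u x) ∂μ ≤ ∫⁻ x in s, u x ∂μ :=
  ENNReal.tsum_le_of_sum_range_le fun m =>
    le_self_add.trans_eq (hP.sum_setLIntegral_preimage_iterate_sub_add hT hu hsub hs m)

variable [SigmaFinite μ]

theorem ae_le_of_forall_setLIntegral_le (hP : IsTransferOperator μ T P) (hT : Measurable T)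
    (hu : Measurable u)
    (h : ∀ s, MeasurableSet s → ∫⁻ x in T ⁻¹' s, u x ∂μ ≤ ∫⁻ x in s, v x ∂μ) :
    P u ≤ᵐ[μ] v :=
  ae_le_of_forall_setLIntegral_le_of_sigmaFinite (hP.measurable u hu) fun s hs _ =>
    hP.setLIntegral_preimage hT hu hs ▸ h s hs

theorem ae_eq_of_forall_setLIntegral_eq (hP : IsTransferOperator μ T P) (hT : Measurable T)
    (hu : Measurable u) (hv : Measurable v)
    (h : ∀ s, MeasurableSet s → ∫⁻ x in T ⁻¹' s, u x ∂μ = ∫⁻ x in s, v x ∂μ) :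
    P u =ᵐ[μ] v :=
  ae_eq_of_forall_setLIntegral_eq_of_sigmaFinite (hP.measurable u hu) hv fun s hs _ =>
    hP.setLIntegral_preimage hT hu hs ▸ h s hs

theorem mono (hP : IsTransferOperator μ T P) (hT : Measurable T) (hu : Measurable u)
    (hv : Measurable v) (h : u ≤ᵐ[μ] v) : P u ≤ᵐ[μ] P v :=
  hP.ae_le_of_forall_setLIntegral_le hT hu fun s hs => by
    rw [← hP.setLIntegral_preimage hT hv hs]
    exact lintegral_mono_ae (ae_restrict_of_ae h)

theorem const (hP : IsTransferOperator μ T P) (hT : MeasurePreserving T μ μ) (c : ℝ≥0∞) :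
    P (fun _ => c) =ᵐ[μ] fun _ => c :=
  hP.ae_eq_of_forall_setLIntegral_eq hT.measurable measurable_const measurable_const
    fun s hs => by
      rw [setLIntegral_const, setLIntegral_const, hT.measure_preimage hs.nullMeasurableSet]

theorem add (hP : IsTransferOperator μ T P) (hT : Measurable T) (hu : Measurable u)
    (hv : Measurable v) : P (u + v) =ᵐ[μ] P u + P v :=
  hP.ae_eq_of_forall_setLIntegral_eq hT (hu.add hv)
    ((hP.measurable u hu).add (hP.measurable v hv)) fun s hs => by
      simp only [Pi.add_apply]
      rw [lintegral_add_left hu, lintegral_add_left (hP.measurable u hu),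
        hP.setLIntegral_preimage hT hu hs, hP.setLIntegral_preimage hT hv hs]

theorem const_mul (hP : IsTransferOperator μ T P) (hT : Measurable T) (hu : Measurable u)
    (c : ℝ≥0∞) : P (fun x => c * u x) =ᵐ[μ] fun x => c * P u x :=
  hP.ae_eq_of_forall_setLIntegral_eq hT (hu.const_mul c) ((hP.measurable u hu).const_mul c)
    fun s hs => by
      rw [lintegral_const_mul c hu, lintegral_const_mul c (hP.measurable u hu),
        hP.setLIntegral_preimage hT hu hs]

theorem subinvariant_inf (hP : IsTransferOperator μ T P) (hT : Measurable T) (hu : Measurable u)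
    (hv : Measurable v) (hPu : P u ≤ᵐ[μ] u) (hPv : P v ≤ᵐ[μ] v) : P (u ⊓ v) ≤ᵐ[μ] u ⊓ v := by
  filter_upwards [hP.mono hT (hu.inf hv) hu (.of_forall fun _ => inf_le_left),
    hP.mono hT (hu.inf hv) hv (.of_forall fun _ => inf_le_right), hPu, hPv] with x h₁ h₂ h₃ h₄
  exact le_inf (h₁.trans h₃) (h₂.trans h₄)

theorem subinvariant_iSup (hP : IsTransferOperator μ T P) (hT : Measurable T)
    {u : ℕ → X → ℝ≥0∞} (hu : ∀ n, Measurable (u n)) (hmono : Monotone u)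
    (hsub : ∀ n, P (u n) ≤ᵐ[μ] u n) : P (fun x => ⨆ n, u n x) ≤ᵐ[μ] fun x => ⨆ n, u n x := by
  refine hP.ae_le_of_forall_setLIntegral_le hT (.iSup hu) fun s hs => ?_
  calc ∫⁻ x in T ⁻¹' s, ⨆ n, u n x ∂μ
      = ⨆ n, ∫⁻ x in s, P (u n) x ∂μ := by
        simp only [lintegral_iSup hu hmono, hP.setLIntegral_preimage hT (hu _) hs]
    _ ≤ ⨆ n, ∫⁻ x in s, u n x ∂μ :=
        iSup_mono fun n => lintegral_mono_ae (ae_restrict_of_ae (hsub n))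
    _ = ∫⁻ x in s, ⨆ n, u n x ∂μ := (lintegral_iSup hu hmono).symm

theorem subinvariant_of_add (hP : IsTransferOperator μ T P) (hT : Measurable T)
    (hu : Measurable u) (hv : Measurable v) (hPu : P u =ᵐ[μ] u) (hfin : ∀ x, u x ≠ ∞)
    (hsub : P (v + u) ≤ᵐ[μ] v + u) : P v ≤ᵐ[μ] v := by
  filter_upwards [hP.add hT hv hu, hPu, hsub] with x hadd hux hle
  rw [hadd, Pi.add_apply, Pi.add_apply, hux] at hle
  exact (ENNReal.add_le_add_iff_right (hfin x)).1 hle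

theorem subinvariant_indicator_support (hP : IsTransferOperator μ T P)
    (hT : MeasurePreserving T μ μ) (hu : Measurable u) (hsub : P u ≤ᵐ[μ] u) :
    P ((support u).indicator 1) ≤ᵐ[μ] (support u).indicator 1 := by
  set w : ℕ → X → ℝ≥0∞ := fun n => (fun x => n * u x) ⊓ fun _ => 1
  have hw : ∀ n, Measurable (w n) := fun n => (hu.const_mul _).inf measurable_const
  have hsup : (fun x => ⨆ n, w n x) = (support u).indicator 1 := by
    ext x
    dsimp only [w, Pi.inf_apply]
    rw [ENNReal.iSup_min_natCast_mul_one]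
    by_cases hx : u x = 0 <;> simp [hx]
  rw [← hsup]
  refine hP.subinvariant_iSup hT.measurable hw (fun m n hmn x => ?_) fun n => ?_
  · dsimp only [w, Pi.inf_apply]
    gcongr
  · refine hP.subinvariant_inf hT.measurable (hu.const_mul _) measurable_const ?_
      (hP.const hT 1).le
    filter_upwards [hP.const_mul hT.measurable hu n, hsub] with x hx hux
    rw [hx]
    gcongr

theorem invariant_of_subinvariant (hP : IsTransferOperator μ T P)
    (hc : Conservative T μ) (hu : Measurable u) (hfin : ∀ x, u x ≠ ∞) (hsub : P u ≤ᵐ[μ] u) :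
    P u =ᵐ[μ] u := by
  have hd : Measurable fun x => u x - P u x := hu.sub (hP.measurable u hu)
  have hzero : ∀ s, MeasurableSet s → ∫⁻ x in s, u x ∂μ ≠ ∞ →
      ∫⁻ x in s, (u x - P u x) ∂μ = 0 := by
    intro s hs hfin_s
    by_contra hne
    refine hfin_s (top_unique ?_)
    calc ∞ = ∞ * ∫⁻ x in s, (u x - P u x) ∂μ := (ENNReal.top_mul hne).symm
      _ = ∑' k, ∫⁻ x in s ∩ T^[k] ⁻¹' s, (u x - P u x) ∂μ :=
        (hc.tsum_setLIntegral_inter_preimage_iterate hs hd).symm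
      _ ≤ ∑' k, ∫⁻ x in T^[k] ⁻¹' s, (u x - P u x) ∂μ :=
        ENNReal.tsum_le_tsum fun k => lintegral_mono_set inter_subset_right
      _ ≤ ∫⁻ x in s, u x ∂μ :=
        hP.tsum_setLIntegral_preimage_iterate_sub_le hc.measurable hu hsub hs
  suffices hd0 : ∀ᵐ x ∂μ, u x - P u x = 0 by
    filter_upwards [hsub, hd0] with x h₁ h₂
    exact le_antisymm h₁ (tsub_eq_zero_iff_le.1 h₂)
  refine ae_of_forall_measure_lt_top_ae_restrict _ fun s hs hμs => ?_
  have hcover : s = ⋃ n : ℕ, s ∩ {x | u x ≤ n} := by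
    rw [← inter_iUnion, eq_comm, inter_eq_left]
    exact fun x _ => mem_iUnion.2 ((ENNReal.exists_nat_gt (hfin x)).imp fun _ hn => hn.le)
  rw [hcover, ae_restrict_iUnion_iff]
  intro n
  have hsn : MeasurableSet (s ∩ {x | u x ≤ n}) := hs.inter (measurableSet_le hu measurable_const)
  have hbound : ∫⁻ x in s ∩ {x | u x ≤ n}, u x ∂μ ≤ n * μ s :=
    calc ∫⁻ x in s ∩ {x | u x ≤ n}, u x ∂μ ≤ ∫⁻ _ in s ∩ {x | u x ≤ n}, (n : ℝ≥0∞) ∂μ :=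
          setLIntegral_mono measurable_const fun x hx => hx.2
      _ ≤ n * μ s := by rw [setLIntegral_const]; gcongr; exact inter_subset_left
  exact (lintegral_eq_zero_iff hd).1 (hzero _ hsn
    (ne_top_of_le_ne_top (mul_ne_top (natCast_ne_top n) hμs.ne) hbound))

theorem preimage_ae_eq_of_subinvariant_indicator (hP : IsTransferOperator μ T P)
    (hT : MeasurePreserving T μ μ) (hc : Conservative T μ) (hs : MeasurableSet s)
    (hsub : P (s.indicator 1) ≤ᵐ[μ] s.indicator 1) : T ⁻¹' s =ᵐ[μ] s := by
  have hind : Measurable (s.indicator (1 : X → ℝ≥0∞)) := measurable_one.indicator hs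
  have hinv : P (s.indicator 1) =ᵐ[μ] s.indicator 1 :=
    hP.invariant_of_subinvariant hc hind (fun x => by by_cases hx : x ∈ s <;> simp [hx]) hsub
  have hsub_compl : P (sᶜ.indicator 1) ≤ᵐ[μ] sᶜ.indicator 1 := by
    refine hP.subinvariant_of_add hT.measurable hind (measurable_one.indicator hs.compl) hinv
      (fun x => by by_cases hx : x ∈ s <;> simp [hx]) ?_
    rw [indicator_compl_add_self]
    exact (hP.const hT 1).le
  have h₁ := hP.ae_le_preimage_of_subinvariant_indicator hT.measurable hs hsub
  have h₂ :=
    (hP.ae_le_preimage_of_subinvariant_indicator hT.measurable hs.compl hsub_compl).compl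
  rw [preimage_compl, compl_compl, compl_compl] at h₂
  exact h₂.antisymm h₁

theorem preimage_setOf_lt_ae_eq (hP : IsTransferOperator μ T P) (hT : MeasurePreserving T μ μ)
    (hc : Conservative T μ) {g : X → ℝ≥0∞} (hg : Measurable g) (hsub : P g ≤ᵐ[μ] g)
    (c : ℝ≥0∞) : T ⁻¹' {x | c < g x} =ᵐ[μ] {x | c < g x} := by
  rcases eq_or_ne c ∞ with rfl | hc_top
  · simp
  have hmin : Measurable (g ⊓ fun _ => c) := hg.inf measurable_const
  have hexcess : Measurable fun x => g x - c := hg.sub measurable_const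
  have hmin_inv : P (g ⊓ fun _ => c) =ᵐ[μ] g ⊓ fun _ => c :=
    hP.invariant_of_subinvariant hc hmin (fun x => ne_top_of_le_ne_top hc_top inf_le_right)
      (hP.subinvariant_inf hT.measurable hg measurable_const hsub (hP.const hT c).le)
  have hexcess_sub : P (fun x => g x - c) ≤ᵐ[μ] fun x => g x - c := by
    refine hP.subinvariant_of_add hT.measurable hmin hexcess hmin_inv
      (fun x => ne_top_of_le_ne_top hc_top inf_le_right) ?_
    have hsplit : ((fun x => g x - c) + g ⊓ fun _ => c) = g := funext fun x => tsub_add_min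
    rwa [hsplit]
  have hlevel : {x | c < g x} = support fun x => g x - c :=
    ext fun x => by simp [tsub_eq_zero_iff_le]
  rw [hlevel]
  exact hP.preimage_ae_eq_of_subinvariant_indicator hT hc (measurableSet_support hexcess)
    (hP.subinvariant_indicator_support hT hexcess hexcess_sub)

end IsTransferOperator

end

theorem stmt2_general {X : Type*} [MeasurableSpace X] (μ : Measure X) [SigmaFinite μ]
    (T : X → X) (hc : Conservative T μ) (herg : Ergodic T μ)
    (Phat : (X → ℝ≥0∞) → (X → ℝ≥0∞))
    (hPmeas : ∀ f, Measurable f → Measurable (Phat f))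
    (hPdual : ∀ f g : X → ℝ≥0∞, Measurable f → Measurable g →
      ∫⁻ x, f (T x) * g x ∂μ = ∫⁻ x, f x * Phat g x ∂μ)
    (g : X → ℝ≥0∞) (hg : Measurable g)
    (hsub : ∀ᵐ x ∂μ, Phat g x ≤ g x) :
    ∃ c : ℝ≥0∞, g =ᵐ[μ] fun _ => c := by
  have hP : IsTransferOperator μ T Phat := ⟨hPmeas, hPdual⟩
  refine exists_eventuallyEq_const_of_forall_separating (· ∈ range (Ioi : ℝ≥0∞ → Set ℝ≥0∞)) ?_
  rintro _ ⟨c, rfl⟩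
  exact herg.quasiErgodic.ae_mem_or_ae_notMem₀
    (measurableSet_lt measurable_const hg).nullMeasurableSet
    (hP.preimage_setOf_lt_ae_eq herg.toMeasurePreserving hc hg hsub c)

/-- Subinvariant nonnegative functions for the transfer operator of a conservative
ergodic measure preserving transformation are a.e. constant. Here `Phat` is the
transfer operator, characterized by duality: `∫ (f ∘ T) · g = ∫ f · Phat g`. -/
theorem stmt2 {X : Type*} [MeasurableSpace X] (μ : Measure X) [SigmaFinite μ]
    (T : X → X) (hc : Conservative T μ) (herg : Ergodic T μ)
    (Phat : (X → ℝ≥0∞) → (X → ℝ≥0∞))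
    (hPmeas : ∀ f, Measurable f → Measurable (Phat f))
    (hPdual : ∀ f g : X → ℝ≥0∞, Measurable f → Measurable g →
      ∫⁻ x, f (T x) * g x ∂μ = ∫⁻ x, f x * Phat g x ∂μ)
    (g : X → ℝ≥0∞) (hg : Measurable g) (hgfin : ∀ x, g x ≠ ⊤)
    (hsub : ∀ᵐ x ∂μ, Phat g x ≤ g x) :
    ∃ c : ℝ≥0∞, g =ᵐ[μ] fun _ => c :=
  stmt2_general μ T hc herg Phat hPmeas hPdual g hg hsub
end

section
/- Let R_n be nonnegative random variables with E(R_n) = 1. If R_n ≤ 1 + ε(1 + dμ/dP) a.e., where μ is a probability measure absolutely continuous with respect to P, then for every t ∈ (0,1), P([R_n ≤ t]) ≤ 2ε / (1 + ε − t). -/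
open MeasureTheory Filter Topology ENNReal

/-!
Let `A = {R ≤ t}` and `p = P(A)`. Splitting `1 = E(R)` over `A` and `Aᶜ`, the integral over `A` is at
most `t p`, and the bound on `R` gives `∫_{Aᶜ} R dP ≤ (1 + ε)(1 - p) + ε μ(Aᶜ) ≤ (1 + ε)(1 - p) + ε`.
Hence `1 ≤ t p + (1 + ε)(1 - p) + ε`, i.e. `p (1 + ε - t) ≤ 2ε`.
-/

theorem setIntegral_le_of_le_const_real {X : Type*} [MeasurableSpace X] {μ : Measure X}
    {f : X → ℝ} {s : Set X} {c : ℝ} (hs : MeasurableSet s) (hμs : μ s ≠ ∞)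
    (hf : ∀ x ∈ s, f x ≤ c) (hfint : IntegrableOn f s μ) :
    ∫ x in s, f x ∂μ ≤ c * μ.real s := by
  calc ∫ x in s, f x ∂μ ≤ ∫ _ in s, c ∂μ :=
        setIntegral_mono_on hfint (integrableOn_const hμs) hs hf
    _ = c * μ.real s := by rw [setIntegral_const, smul_eq_mul, mul_comm]

theorem setIntegral_le_of_ae_le_one_add_mul_rnDeriv {Ω : Type*} [MeasurableSpace Ω]
    {P μ : Measure Ω} [IsFiniteMeasure P] [IsFiniteMeasure μ] {R : Ω → ℝ} {ε : ℝ}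
    (hε : 0 ≤ ε) (hRint : Integrable R P)
    (hbd : ∀ᵐ x ∂P, R x ≤ 1 + ε * (1 + (μ.rnDeriv P x).toReal)) (s : Set Ω) :
    ∫ x in s, R x ∂P ≤ (1 + ε) * P.real s + ε * μ.real s := by
  have hrn : Integrable (fun x ↦ (μ.rnDeriv P x).toReal) P := Measure.integrable_toReal_rnDeriv
  calc ∫ x in s, R x ∂P ≤ ∫ x in s, ((1 + ε) + ε * (μ.rnDeriv P x).toReal) ∂P := by
        refine setIntegral_mono_ae_restrict hRint.integrableOn
          ((integrable_const _).add (hrn.const_mul ε)).integrableOn (ae_restrict_of_ae ?_)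
        filter_upwards [hbd] with x hx
        linarith
    _ = (1 + ε) * P.real s + ε * ∫ x in s, (μ.rnDeriv P x).toReal ∂P := by
        rw [integral_add (integrable_const _).integrableOn (hrn.const_mul ε).integrableOn,
          setIntegral_const, integral_const_mul, smul_eq_mul, mul_comm]
    _ ≤ (1 + ε) * P.real s + ε * μ.real s := by
        gcongr
        exact Measure.setIntegral_toReal_rnDeriv_le (measure_ne_top μ s)

theorem stmt5_general {Ω : Type*} [MeasurableSpace Ω] (P μ : Measure Ω)
    [IsProbabilityMeasure P] [IsProbabilityMeasure μ]
    (R : Ω → ℝ) (hRmeas : Measurable R)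
    (hRint : Integrable R P) (hRmean : ∫ x, R x ∂P = 1)
    (ε : ℝ) (hε : 0 < ε)
    (hbd : ∀ᵐ x ∂P, R x ≤ 1 + ε * (1 + (μ.rnDeriv P x).toReal))
    (t : ℝ) (ht : t ∈ Set.Ioo (0 : ℝ) 1) :
    (P {x | R x ≤ t}).toReal ≤ 2 * ε / (1 + ε - t) := by
  set A : Set Ω := {x | R x ≤ t}
  have hA : MeasurableSet A := measurableSet_le hRmeas measurable_const
  have hlow : ∫ x in A, R x ∂P ≤ t * P.real A :=
    setIntegral_le_of_le_const_real hA (measure_ne_top P A) (fun _ hx ↦ hx) hRint.integrableOn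
  have hhigh := setIntegral_le_of_ae_le_one_add_mul_rnDeriv hε.le hRint hbd Aᶜ
  rw [probReal_compl_eq_one_sub hA] at hhigh
  have hsplit : ∫ x in A, R x ∂P + ∫ x in Aᶜ, R x ∂P = 1 := by
    rw [integral_add_compl hA hRint, hRmean]
  have hμAc : μ.real Aᶜ ≤ 1 := measureReal_le_one
  rw [← measureReal_def, le_div_iff₀ (by linarith [ht.2])]
  nlinarith

/-- If `R ≥ 0`, `E(R) = 1` and `R ≤ 1 + ε(1 + dμ/dP)` a.e., then
`P([R ≤ t]) ≤ 2ε/(1 + ε − t)` for every `t ∈ (0,1)`. -/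
theorem stmt5 {Ω : Type*} [MeasurableSpace Ω] (P μ : Measure Ω)
    [IsProbabilityMeasure P] [IsProbabilityMeasure μ] (hac : μ ≪ P)
    (R : Ω → ℝ) (hRmeas : Measurable R) (hRpos : ∀ x, 0 ≤ R x)
    (hRint : Integrable R P) (hRmean : ∫ x, R x ∂P = 1)
    (ε : ℝ) (hε : 0 < ε)
    (hbd : ∀ᵐ x ∂P, R x ≤ 1 + ε * (1 + (μ.rnDeriv P x).toReal))
    (t : ℝ) (ht : t ∈ Set.Ioo (0 : ℝ) 1) :
    (P {x | R x ≤ t}).toReal ≤ 2 * ε / (1 + ε - t) :=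
  stmt5_general P μ R hRmeas hRint hRmean ε hε hbd t ht
end

section
/- If (a(n)) is γ-regularly varying with γ ∈ (0,1), b is an asymptotic inverse of a (i.e. b(a(n)) ∼ a(b(n)) ∼ n), and φ₋ is a nonincreasing sequence satisfying φ₋(a(a(n))) ≤ a(n)/n for all large n, then ∑_{n=1}^∞ φ₋(n)/n < ∞. -/
/-! Since `a(2n)/a(n) → 2^γ < 2^s` for any `s ∈ (γ, 1)`, iterating the doubling inequality along
`2^k N` gives a Potter bound `a(n) ≤ C n^s`. Hence `φ(a(a n)) ≤ a(n)/n ≤ C n^{-(1-s)}`, while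
`a(a n) ≤ C' n^{s²}`. As `φ` is nonincreasing and `a ∘ a → ∞`, every large `m` lies between two
consecutive values of `a ∘ a`, which yields `φ(m) = O(m^{-(1-s)/s²})`; the series `∑ φ(n)/n` is then
dominated by a convergent `p`-series. -/

open Filter Topology

theorem exists_le_lt_succ_of_tendsto_atTop {α : Type*} [LinearOrder α] [NoMaxOrder α]
    {u : ℕ → α} (hu : Tendsto u atTop atTop) {N : ℕ} {m : α} (hm : u N ≤ m) :
    ∃ n ≥ N, u n ≤ m ∧ m < u (n + 1) := by
  by_contra! h
  have hle : ∀ n ≥ N, u n ≤ m := fun n hn =>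
    Nat.le_induction hm (fun k hk hk' => h k hk hk') n hn
  obtain ⟨n, hn⟩ := ((hu.eventually_gt_atTop m).and (eventually_ge_atTop N)).exists
  exact (hle n hn.2).not_gt hn.1

theorem apply_two_pow_mul_le {a : ℕ → ℝ} {s : ℝ} {N : ℕ}
    (hdbl : ∀ n ≥ N, a (2 * n) ≤ 2 ^ s * a n) (k : ℕ) :
    a (2 ^ k * N) ≤ ((2 : ℝ) ^ k) ^ s * a N := by
  induction k with
  | zero => simp
  | succ k ih =>
    calc a (2 ^ (k + 1) * N) = a (2 * (2 ^ k * N)) := by ring_nf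
      _ ≤ 2 ^ s * a (2 ^ k * N) := hdbl _ (Nat.le_mul_of_pos_left N (by positivity))
      _ ≤ 2 ^ s * (((2 : ℝ) ^ k) ^ s * a N) := by gcongr
      _ = ((2 : ℝ) ^ (k + 1)) ^ s * a N := by
        rw [pow_succ, Real.mul_rpow (by positivity) (by norm_num)]; ring

theorem Monotone.exists_le_mul_rpow_of_doubling {a : ℕ → ℝ} (ha : Monotone a) {s : ℝ}
    (hs : 0 ≤ s) (hdbl : ∀ᶠ n in atTop, a (2 * n) ≤ 2 ^ s * a n) :
    ∃ C, 0 ≤ C ∧ ∀ n ≥ 1, a n ≤ C * (n : ℝ) ^ s := by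
  obtain ⟨N, hN⟩ := eventually_atTop.mp (hdbl.and (eventually_ge_atTop 1))
  refine ⟨2 ^ s * |a N|, by positivity, fun n hn => ?_⟩
  have hns : 1 ≤ (n : ℝ) ^ s := Real.one_le_rpow (by exact_mod_cast hn) hs
  rcases le_or_gt N n with hNn | hnN
  · set k := Nat.log 2 n
    have hnk : n ≤ 2 ^ (k + 1) * N :=
      (Nat.lt_pow_succ_log_self one_lt_two n).le.trans (Nat.le_mul_of_pos_right _ (hN N le_rfl).2)
    have hkn : ((2 : ℝ) ^ k) ^ s ≤ (n : ℝ) ^ s := by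
      gcongr; exact_mod_cast Nat.pow_log_le_self 2 (by omega)
    calc a n ≤ a (2 ^ (k + 1) * N) := ha hnk
      _ ≤ ((2 : ℝ) ^ (k + 1)) ^ s * a N := apply_two_pow_mul_le (fun n hn => (hN n hn).1) _
      _ ≤ ((2 : ℝ) ^ (k + 1)) ^ s * |a N| := by gcongr; exact le_abs_self _
      _ = 2 ^ s * |a N| * ((2 : ℝ) ^ k) ^ s := by
        rw [pow_succ, Real.mul_rpow (by positivity) (by norm_num)]; ring
      _ ≤ 2 ^ s * |a N| * (n : ℝ) ^ s := by gcongr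
  · have h2s : 1 ≤ (2 : ℝ) ^ s := Real.one_le_rpow one_le_two hs
    calc a n ≤ a N := ha hnN.le
      _ ≤ |a N| := le_abs_self _
      _ ≤ 2 ^ s * |a N| * (n : ℝ) ^ s := by
        nlinarith [abs_nonneg (a N), mul_le_mul h2s hns zero_le_one (by positivity)]

theorem Monotone.tendsto_atTop_of_doubling_ratio {a : ℕ → ℝ} (ha : Monotone a) (ha0 : 0 < a 0)
    {c : ℝ} (hc : c ≠ 1) (hratio : Tendsto (fun n => a (2 * n) / a n) atTop (𝓝 c)) :
    Tendsto a atTop atTop := by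
  by_contra hnot
  have hbdd : BddAbove (Set.range a) := by
    by_contra h; exact hnot (tendsto_atTop_atTop_of_monotone' ha h)
  have hlim := tendsto_atTop_ciSup ha hbdd
  have hL : 0 < ⨆ n, a n := ha0.trans_le (le_ciSup hbdd 0)
  have hlim2 : Tendsto (fun n => a (2 * n)) atTop (𝓝 (⨆ n, a n)) :=
    hlim.comp (tendsto_id.const_mul_atTop' two_pos)
  refine hc (tendsto_nhds_unique hratio ?_)
  rw [← div_self hL.ne']
  exact hlim2.div hlim hL.ne'
theorem comp_self_le_mul_rpow {a : ℕ → ℕ} (ha : ∀ n, 0 < a n) {C s : ℝ} (hC : 0 ≤ C)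
    (hs : 0 ≤ s) (h : ∀ n ≥ 1, (a n : ℝ) ≤ C * (n : ℝ) ^ s) (n : ℕ) (hn : 1 ≤ n) :
    (a (a n) : ℝ) ≤ C * C ^ s * (n : ℝ) ^ (s * s) := by
  calc (a (a n) : ℝ) ≤ C * (a n : ℝ) ^ s := h _ (ha n)
    _ ≤ C * (C * (n : ℝ) ^ s) ^ s := by gcongr; exact h n hn
    _ = C * C ^ s * (n : ℝ) ^ (s * s) := by
      rw [Real.mul_rpow hC (by positivity), ← Real.rpow_mul (by positivity)]; ring

theorem Antitone.exists_eventually_le_rpow_of_comp {φ : ℕ → ℝ} (hφ : Antitone φ)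
    {u : ℕ → ℕ} (hu : Tendsto u atTop atTop) {t α C K : ℝ} (ht : 0 < t) (hα : 0 ≤ α)
    (hC : 0 ≤ C) (hK : 0 ≤ K) (hup : ∀ᶠ n in atTop, (u n : ℝ) ≤ K * (n : ℝ) ^ t)
    (hφu : ∀ᶠ n in atTop, φ (u n) ≤ C * (n : ℝ) ^ (-α)) :
    ∃ D, ∀ᶠ m in atTop, φ m ≤ D * (m : ℝ) ^ (-(α / t)) := by
  obtain ⟨N, hN⟩ := eventually_atTop.mp (hup.and (hφu.and (eventually_ge_atTop 1)))
  refine ⟨C * (K * 2 ^ t) ^ (α / t), ?_⟩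
  filter_upwards [eventually_ge_atTop (max (u N) 1)] with m hm
  obtain ⟨n, hNn, hnm, hmn⟩ := exists_le_lt_succ_of_tendsto_atTop hu (le_of_max_le_left hm)
  obtain ⟨-, hφn, hn1⟩ := hN n hNn
  have hn : (0 : ℝ) < n := by exact_mod_cast hn1
  have hm0 : (0 : ℝ) < m := by exact_mod_cast le_of_max_le_right hm
  have hmn' : (m : ℝ) ≤ K * 2 ^ t * (n : ℝ) ^ t := by
    calc (m : ℝ) ≤ u (n + 1) := by exact_mod_cast hmn.le
      _ ≤ K * ((n + 1 : ℕ) : ℝ) ^ t := (hN (n + 1) (by omega)).1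
      _ ≤ K * (2 * (n : ℝ)) ^ t := by
        gcongr; push_cast; linarith [(Nat.one_le_cast (α := ℝ)).mpr hn1]
      _ = K * 2 ^ t * (n : ℝ) ^ t := by rw [Real.mul_rpow zero_le_two hn.le]; ring
  have hpow : (m : ℝ) ^ (α / t) ≤ (K * 2 ^ t) ^ (α / t) * (n : ℝ) ^ α := by
    calc (m : ℝ) ^ (α / t) ≤ (K * 2 ^ t * (n : ℝ) ^ t) ^ (α / t) := by gcongr
      _ = (K * 2 ^ t) ^ (α / t) * (n : ℝ) ^ α := by
        rw [Real.mul_rpow (by positivity) (by positivity), ← Real.rpow_mul hn.le,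
          mul_div_cancel₀ _ ht.ne']
  calc φ m ≤ φ (u n) := hφ hnm
    _ ≤ C * (n : ℝ) ^ (-α) := hφn
    _ ≤ C * (K * 2 ^ t) ^ (α / t) * (m : ℝ) ^ (-(α / t)) := by
      rw [Real.rpow_neg hn.le, Real.rpow_neg hm0.le, mul_assoc]
      gcongr
      rw [← div_eq_mul_inv, le_div_iff₀ (by positivity), inv_mul_eq_div,
        div_le_iff₀ (by positivity)]
      exact hpow
theorem summable_div_of_eventually_le_rpow {φ : ℕ → ℝ} (hφ : ∀ n, 0 ≤ φ n) {D δ : ℝ}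
    (hδ : 0 < δ) (h : ∀ᶠ m in atTop, φ m ≤ D * (m : ℝ) ^ (-δ)) :
    Summable (fun n : ℕ => φ (n + 1) / ((n : ℝ) + 1)) := by
  suffices hs : Summable (fun n : ℕ => φ n / n) by
    simpa only [Nat.cast_add, Nat.cast_one] using (summable_nat_add_iff 1).mpr hs
  refine .of_norm_bounded_eventually_nat
    ((Real.summable_nat_rpow.mpr (by linarith : -δ - 1 < -1)).mul_left D) ?_
  filter_upwards [h, eventually_ge_atTop 1] with m hm hm1
  have hm0 : (0 : ℝ) < m := by exact_mod_cast hm1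
  rw [Real.norm_of_nonneg (div_nonneg (hφ m) hm0.le), Real.rpow_sub_one hm0.ne', ← mul_div_assoc]
  gcongr

theorem stmt9_general (γ : ℝ) (hγ0 : 0 < γ) (hγ1 : γ < 1)
    (a : ℕ → ℕ) (hapos : ∀ n, 0 < a n)
    (hamono : Monotone a)
    (hareg : ∀ l : ℝ, 0 < l →
      Tendsto (fun n : ℕ => (a ⌊l * n⌋₊ : ℝ) / (a n : ℝ)) atTop (𝓝 (l ^ γ)))
    (φ : ℕ → ℝ) (hφ0 : ∀ n, 0 ≤ φ n) (hφmono : Antitone φ)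
    (hbd : ∀ᶠ n : ℕ in atTop, φ (a (a n)) ≤ (a n : ℝ) / (n : ℝ)) :
    Summable (fun n : ℕ => φ (n + 1) / ((n : ℝ) + 1)) := by
  obtain ⟨s, hγs, hs1⟩ := exists_between hγ1
  have hs : 0 < s := hγ0.trans hγs
  have hmono : Monotone fun n => (a n : ℝ) := Nat.mono_cast.comp hamono
  have hratio : Tendsto (fun n : ℕ => (a (2 * n) : ℝ) / a n) atTop (𝓝 (2 ^ γ)) := by
    have hfloor (n : ℕ) : ⌊(2 : ℝ) * n⌋₊ = 2 * n := by exact_mod_cast Nat.floor_natCast (2 * n)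
    simpa only [hfloor] using hareg 2 two_pos
  have hatop : Tendsto a atTop atTop := tendsto_natCast_atTop_iff.mp <|
    hmono.tendsto_atTop_of_doubling_ratio (by exact_mod_cast hapos 0)
      (Real.one_lt_rpow one_lt_two hγ0).ne' hratio
  obtain ⟨C, hC, hCa⟩ := hmono.exists_le_mul_rpow_of_doubling hs.le <| by
    filter_upwards [hratio.eventually (eventually_le_nhds
      (Real.rpow_lt_rpow_of_exponent_lt one_lt_two hγs))] with n hn
    rwa [div_le_iff₀ (by exact_mod_cast hapos n)] at hn
  have hφaa : ∀ᶠ n in atTop, φ (a (a n)) ≤ C * (n : ℝ) ^ (-(1 - s)) := by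
    filter_upwards [hbd, eventually_ge_atTop 1] with n hn hn1
    have hn0 : (0 : ℝ) < n := by exact_mod_cast hn1
    rw [neg_sub, Real.rpow_sub_one hn0.ne', ← mul_div_assoc]
    exact hn.trans (div_le_div_of_nonneg_right (hCa n hn1) hn0.le)
  obtain ⟨D, hD⟩ := hφmono.exists_eventually_le_rpow_of_comp (hatop.comp hatop)
    (mul_pos hs hs) (sub_nonneg.mpr hs1.le) hC (by positivity)
    (eventually_atTop.mpr ⟨1, comp_self_le_mul_rpow hapos hC hs.le hCa⟩) hφaa
  exact summable_div_of_eventually_le_rpow hφ0 (div_pos (sub_pos.mpr hs1) (mul_pos hs hs)) hD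

/-- If `a` is `γ`-regularly varying with `γ ∈ (0,1)`, `b` is an asymptotic inverse of `a`,
and `φ₋` is nonincreasing with `φ₋(a(a(n))) ≤ a(n)/n` for all large `n`, then
`∑ φ₋(n)/n < ∞`. -/
theorem stmt9 (γ : ℝ) (hγ0 : 0 < γ) (hγ1 : γ < 1)
    (a b : ℕ → ℕ) (hapos : ∀ n, 0 < a n) (hbpos : ∀ n, 0 < b n)
    (hamono : Monotone a)
    (hareg : ∀ l : ℝ, 0 < l →
      Tendsto (fun n : ℕ => (a ⌊l * n⌋₊ : ℝ) / (a n : ℝ)) atTop (𝓝 (l ^ γ)))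
    (hba : Tendsto (fun n : ℕ => (b (a n) : ℝ) / (n : ℝ)) atTop (𝓝 1))
    (hab : Tendsto (fun n : ℕ => (a (b n) : ℝ) / (n : ℝ)) atTop (𝓝 1))
    (φ : ℕ → ℝ) (hφ0 : ∀ n, 0 ≤ φ n) (hφmono : Antitone φ)
    (hbd : ∀ᶠ n : ℕ in atTop, φ (a (a n)) ≤ (a n : ℝ) / (n : ℝ)) :
    Summable (fun n : ℕ => φ (n + 1) / ((n : ℝ) + 1)) :=
  stmt9_general γ hγ0 hγ1 a hapos hamono hareg φ hφ0 hφmono hbd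
end

section
/- Occupation time powers admit the combinatorial decomposition S_n(1_A)^p = ∑_{q=1}^p γ_p(q) a(q, n), where a(0,n) := 1, a(p+1,n)(x) := ∑_{k=1}^n 1_A(T^k x) · a(p, n−k)(T^k x), γ_1(q) := δ_{1,q}, and γ_{p+1}(q) := q(γ_p(q) + γ_p(q−1)); in particular γ_p(p) = p!. -/
/-!
Write `S_n(x)` for the number of times `k ∈ [1, n]` with `T^k x ∈ A`. Splitting off the first
step of the orbit gives `a(q+1, n+1)(x) = 1_A(Tx) a(q, n)(Tx) + a(q+1, n)(Tx)` and
`S_{n+1}(x) = 1_A(Tx) + S_n(Tx)`, which is Pascal's rule; hence `a(q, n)(x) = C(S_n(x), q)`.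
The coefficients are `γ_p(q) = q! S(p, q)` with `S` the Stirling numbers of the second kind, so
the identity is the expansion `s^p = ∑_q S(p, q) s(s-1)⋯(s-q+1)` of powers in falling
factorials, and `γ_p(p) = p!` because `S(p, p) = 1`.
-/

open MeasureTheory Filter Topology

/-- The combinatorial quantities `a(p,n)`:
`a(0,n) = 1`, `a(p+1,n)(x) = ∑_{k=1}^n 1_A(T^k x) a(p, n−k)(T^k x)`. -/
noncomputable def aFun {X : Type*} (T : X → X) (A : Set X) : ℕ → ℕ → X → ℕ
  | 0, _, _ => 1
  | (p + 1), n, x =>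
      ∑ k ∈ Finset.Icc 1 n, A.indicator (fun y => aFun T A p (n - k) y) (T^[k] x)

/-- The coefficients `γ_p(q)`: `γ_1(q) = δ_{1,q}`, `γ_{p+1}(q) = q(γ_p(q) + γ_p(q−1))`. -/
def gam : ℕ → ℕ → ℕ
  | 0, _ => 0
  | 1, q => if q = 1 then 1 else 0
  | (p + 2), q => q * (gam (p + 1) q + gam (p + 1) (q - 1))

open Finset Nat

theorem gam_eq_factorial_mul_stirlingSecond {p : ℕ} (hp : 1 ≤ p) (q : ℕ) :
    gam p q = q ! * stirlingSecond p q := by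
  induction p, hp using Nat.le_induction generalizing q with
  | base =>
    rcases q with _ | _ | q
    · rfl
    · rfl
    · simp [gam, stirlingSecond_eq_zero_of_lt]
  | succ p hp ih =>
    obtain ⟨p, rfl⟩ := Nat.exists_eq_add_of_le' hp
    rcases q with _ | q
    · simp [gam]
    · rw [gam, ih, ih, stirlingSecond_succ_succ (p + 1) q, Nat.add_sub_cancel, factorial_succ]
      ring

theorem gam_self {p : ℕ} (hp : 1 ≤ p) : gam p p = p ! := by
  rw [gam_eq_factorial_mul_stirlingSecond hp, stirlingSecond_self, mul_one]

theorem mul_descFactorial_eq (s q : ℕ) :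
    s * s.descFactorial q = s.descFactorial (q + 1) + q * s.descFactorial q := by
  rcases le_or_gt q s with h | h
  · rw [descFactorial_succ, ← add_mul, Nat.sub_add_cancel h]
  · simp [descFactorial_of_lt h]

theorem pow_eq_sum_stirlingSecond_mul_descFactorial (s p : ℕ) :
    s ^ p = ∑ q ∈ range (p + 1), stirlingSecond p q * s.descFactorial q := by
  induction p with
  | zero => simp
  | succ p ih =>
    have shift : ∑ q ∈ range (p + 1), q * stirlingSecond p q * s.descFactorial q
        = ∑ q ∈ range (p + 1), (q + 1) * stirlingSecond p (q + 1) * s.descFactorial (q + 1) := by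
      rw [sum_range_succ', sum_range_succ, stirlingSecond_eq_zero_of_lt (lt_add_one p)]
      simp
    calc s ^ (p + 1)
        = ∑ q ∈ range (p + 1), stirlingSecond p q * (s * s.descFactorial q) := by
          rw [pow_succ, mul_comm, ih, mul_sum]
          exact sum_congr rfl fun q _ => by ring
      _ = ∑ q ∈ range (p + 1), stirlingSecond p q * s.descFactorial (q + 1)
          + ∑ q ∈ range (p + 1), q * stirlingSecond p q * s.descFactorial q := by
          simp_rw [mul_descFactorial_eq, mul_add, sum_add_distrib]
          exact congrArg _ (sum_congr rfl fun q _ => by ring)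
      _ = ∑ q ∈ range (p + 2), stirlingSecond (p + 1) q * s.descFactorial q := by
          rw [shift, sum_range_succ' _ (p + 1), ← sum_add_distrib]
          simp only [stirlingSecond_succ_succ, stirlingSecond_succ_zero, zero_mul, add_zero]
          exact sum_congr rfl fun q _ => by ring

theorem pow_eq_sum_gam_mul_choose (s : ℕ) {p : ℕ} (hp : 1 ≤ p) :
    s ^ p = ∑ q ∈ Icc 1 p, gam p q * s.choose q := by
  rw [pow_eq_sum_stirlingSecond_mul_descFactorial, range_eq_Ico,
    sum_eq_sum_Ico_succ_bot (by omega), Ico_add_one_right_eq_Icc]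
  obtain ⟨p, rfl⟩ := Nat.exists_eq_add_of_le' hp
  simp only [stirlingSecond_succ_zero, zero_mul, zero_add]
  exact sum_congr rfl fun q _ => by
    rw [gam_eq_factorial_mul_stirlingSecond hp, descFactorial_eq_factorial_mul_choose]; ring

section Occupation

variable {X : Type*} (T : X → X) (A : Set X)

theorem sum_Icc_one_succ_iterate {M : Type*} [AddCommMonoid M] (g : ℕ → X → M) (n : ℕ) (x : X) :
    ∑ k ∈ Icc 1 (n + 1), g k (T^[k] x) = g 1 (T x) + ∑ k ∈ Icc 1 n, g (k + 1) (T^[k] (T x)) := by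
  induction n with
  | zero => simp
  | succ n ih =>
    rw [sum_Icc_succ_top (by omega), ih, sum_Icc_succ_top (by omega), add_assoc,
      Function.iterate_succ_apply]

theorem aFun_succ_succ (q n : ℕ) (x : X) :
    aFun T A (q + 1) (n + 1) x = A.indicator (aFun T A q n) (T x) + aFun T A (q + 1) n (T x) := by
  rw [aFun, sum_Icc_one_succ_iterate T (fun k => A.indicator (aFun T A q (n + 1 - k))), aFun]
  simp only [Nat.add_sub_cancel, Nat.add_sub_add_right]

theorem aFun_eq_choose (q n : ℕ) (x : X) :
    aFun T A q n x = (∑ k ∈ Icc 1 n, A.indicator (fun _ => (1 : ℕ)) (T^[k] x)).choose q := by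
  induction n generalizing q x with
  | zero => cases q <;> simp [aFun]
  | succ n ih =>
    rcases q with _ | q
    · simp [aFun]
    · rw [aFun_succ_succ, ih, sum_Icc_one_succ_iterate T (fun _ => A.indicator _)]
      by_cases hx : T x ∈ A
      · simp [hx, ih, add_comm 1, Nat.choose_succ_succ']
      · simp [hx]

end Occupation

/-- The occupation time powers decompose as
`S_n(1_A)^p = ∑_{q=1}^p γ_p(q) a(q,n)`; in particular `γ_p(p) = p!`. -/
theorem stmt10 {X : Type*} (T : X → X) (A : Set X) :
    (∀ (x : X) (n p : ℕ), 1 ≤ p →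
      (∑ k ∈ Finset.Icc 1 n, A.indicator (fun _ => (1 : ℕ)) (T^[k] x)) ^ p =
        ∑ q ∈ Finset.Icc 1 p, gam p q * aFun T A q n x) ∧
    (∀ p : ℕ, 1 ≤ p → gam p p = Nat.factorial p) := by
  refine ⟨fun x n p hp => ?_, fun p hp => gam_self hp⟩
  simp_rw [pow_eq_sum_gam_mul_choose _ hp, aFun_eq_choose]
end

section
/- Under θ_μ-mixing, the transfer operator satisfies the pointwise bound Ŝ^{j+p} 1_A ≤ P(A) + θ_μ(p) · dμ/dP a.e. on Ω, for all j, p ≥ 1 and A ∈ σ(α_j). -/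
open MeasureTheory Filter Topology ENNReal

/-! Pairing `Ŝ^{n} 1_A` with `1_B` and using duality `n` times gives
`∫_B Ŝ^{n} 1_A dP = P(A ∩ S^{-n} B)`, which the mixing hypothesis bounds by
`P(A) P(B) + θ(p) μ(B) = ∫_B (P(A) + θ(p) dμ/dP) dP`. An inequality of set integrals over all
measurable `B` is an a.e. inequality of the integrands. -/

theorem ENNReal.le_mul_add_ofReal_mul_of_toReal_le {a b c d : ℝ≥0∞} {t : ℝ} (ha : a ≠ ∞)
    (h : a.toReal ≤ b.toReal * c.toReal + t * d.toReal) : a ≤ b * c + ENNReal.ofReal t * d :=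
  calc a = ENNReal.ofReal a.toReal := (ofReal_toReal ha).symm
    _ ≤ ENNReal.ofReal (b.toReal * c.toReal + t * d.toReal) := ofReal_le_ofReal h
    _ ≤ ENNReal.ofReal (b.toReal * c.toReal) + ENNReal.ofReal (t * d.toReal) := ofReal_add_le
    _ ≤ b * c + ENNReal.ofReal t * d := by
      rw [ofReal_mul toReal_nonneg, ofReal_mul' toReal_nonneg]
      gcongr <;> exact ofReal_toReal_le

section TransferOperator

variable {Ω : Type*} [MeasurableSpace Ω] {P : Measure Ω} {S : Ω → Ω}
  {Shat : (Ω → ℝ≥0∞) → (Ω → ℝ≥0∞)}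

theorem measurable_iterate_of_forall_measurable
    (hSmeas : ∀ f, Measurable f → Measurable (Shat f)) (n : ℕ) {f : Ω → ℝ≥0∞}
    (hf : Measurable f) : Measurable (Shat^[n] f) :=
  Function.Iterate.rec Measurable hf hSmeas n

theorem lintegral_comp_iterate_mul_eq_lintegral_mul_iterate (hS : Measurable S)
    (hSmeas : ∀ f, Measurable f → Measurable (Shat f))
    (hSdual : ∀ f g : Ω → ℝ≥0∞, Measurable f → Measurable g →
      ∫⁻ x, f (S x) * g x ∂P = ∫⁻ x, f x * Shat g x ∂P)
    (n : ℕ) {f g : Ω → ℝ≥0∞} (hf : Measurable f) (hg : Measurable g) :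
    ∫⁻ x, f (S^[n] x) * g x ∂P = ∫⁻ x, f x * Shat^[n] g x ∂P := by
  induction n generalizing f with
  | zero => rfl
  | succ n ih =>
    simp only [Function.iterate_succ_apply']
    exact (ih (hf.comp hS)).trans
      (hSdual _ _ hf (measurable_iterate_of_forall_measurable hSmeas n hg))

theorem setLIntegral_iterate_indicator_one (hS : Measurable S)
    (hSmeas : ∀ f, Measurable f → Measurable (Shat f))
    (hSdual : ∀ f g : Ω → ℝ≥0∞, Measurable f → Measurable g →
      ∫⁻ x, f (S x) * g x ∂P = ∫⁻ x, f x * Shat g x ∂P)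
    (n : ℕ) {A B : Set Ω} (hA : MeasurableSet A) (hB : MeasurableSet B) :
    ∫⁻ x in B, Shat^[n] (A.indicator 1) x ∂P = P (A ∩ S^[n] ⁻¹' B) :=
  calc ∫⁻ x in B, Shat^[n] (A.indicator 1) x ∂P
      = ∫⁻ x, B.indicator 1 x * Shat^[n] (A.indicator 1) x ∂P := by
        rw [← lintegral_indicator hB]
        congr with x
        by_cases hx : x ∈ B <;> simp [hx]
    _ = ∫⁻ x, B.indicator 1 (S^[n] x) * A.indicator 1 x ∂P :=
        (lintegral_comp_iterate_mul_eq_lintegral_mul_iterate hS hSmeas hSdual n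
          (measurable_one.indicator hB) (measurable_one.indicator hA)).symm
    _ = ∫⁻ x, (A ∩ S^[n] ⁻¹' B).indicator 1 x ∂P := by
        congr with x
        rw [Set.inter_indicator_one, mul_comm]
        rfl
    _ = P (A ∩ S^[n] ⁻¹' B) := lintegral_indicator_one (hA.inter (hS.iterate n hB))

end TransferOperator

/-- `F k` plays the role of `σ(α_k)`; `Shat` is the transfer operator of `S` with respect to `P`,
characterized by duality. -/
theorem stmt12_general {Ω : Type*} [MeasurableSpace Ω] (P : Measure Ω) [IsProbabilityMeasure P]
    (S : Ω → Ω) (hS : MeasurePreserving S P P)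
    (Shat : (Ω → ℝ≥0∞) → (Ω → ℝ≥0∞))
    (hSmeas : ∀ f, Measurable f → Measurable (Shat f))
    (hSdual : ∀ f g : Ω → ℝ≥0∞, Measurable f → Measurable g →
      ∫⁻ x, f (S x) * g x ∂P = ∫⁻ x, f x * Shat g x ∂P)
    (μ : Measure Ω) [IsProbabilityMeasure μ] (hμP : μ ≪ P)
    (F : ℕ → MeasurableSpace Ω) (hF : ∀ k, F k ≤ ‹MeasurableSpace Ω›)
    (θ : ℕ → ℝ)
    (hmix : ∀ (n k : ℕ) (A B : Set Ω), 1 ≤ k → MeasurableSet[F k] A → MeasurableSet B →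
      |(P (A ∩ S^[n + k] ⁻¹' B)).toReal - (P A).toReal * (P B).toReal| ≤
        θ n * (μ B).toReal)
    (j p : ℕ) (hj : 1 ≤ j)
    (A : Set Ω) (hA : MeasurableSet[F j] A) :
    ∀ᵐ x ∂P, (Shat^[j + p]) (A.indicator (1 : Ω → ℝ≥0∞)) x ≤
      P A + ENNReal.ofReal (θ p) * μ.rnDeriv P x := by
  have hAmeas : MeasurableSet A := hF j A hA
  refine ae_le_of_forall_setLIntegral_le_of_sigmaFinite
    (measurable_iterate_of_forall_measurable hSmeas _ (measurable_one.indicator hAmeas))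
    fun B hB _ => ?_
  rw [setLIntegral_iterate_indicator_one hS.measurable hSmeas hSdual _ hAmeas hB,
    lintegral_add_left measurable_const, setLIntegral_const,
    lintegral_const_mul _ (μ.measurable_rnDeriv P), Measure.setLIntegral_rnDeriv hμP]
  have hbound := (abs_le.mp (add_comm p j ▸ hmix p j A B hj hA hB)).2
  exact ENNReal.le_mul_add_ofReal_mul_of_toReal_le (measure_ne_top _ _) (by linarith)

/-- Under `θ_μ`-mixing, the transfer operator satisfies
`Ŝ^{j+p} 1_A ≤ P(A) + θ_μ(p) dμ/dP` a.e., for `j, p ≥ 1` and `A ∈ σ(α_j)`.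
Here `F k` plays the role of `σ(α_k)` and `Shat` is the transfer operator of `S`
with respect to `P`, characterized by duality. -/
theorem stmt12 {Ω : Type*} [MeasurableSpace Ω] (P : Measure Ω) [IsProbabilityMeasure P]
    (S : Ω → Ω) (hS : MeasurePreserving S P P)
    (Shat : (Ω → ℝ≥0∞) → (Ω → ℝ≥0∞))
    (hSmeas : ∀ f, Measurable f → Measurable (Shat f))
    (hSdual : ∀ f g : Ω → ℝ≥0∞, Measurable f → Measurable g →
      ∫⁻ x, f (S x) * g x ∂P = ∫⁻ x, f x * Shat g x ∂P)
    (μ : Measure Ω) [IsProbabilityMeasure μ] (hμP : μ ≪ P) (hPμ : P ≪ μ)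
    (F : ℕ → MeasurableSpace Ω) (hF : ∀ k, F k ≤ ‹MeasurableSpace Ω›)
    (θ : ℕ → ℝ) (hθ : ∀ n, 0 ≤ θ n)
    (hmix : ∀ (n k : ℕ) (A B : Set Ω), 1 ≤ k → MeasurableSet[F k] A → MeasurableSet B →
      |(P (A ∩ S^[n + k] ⁻¹' B)).toReal - (P A).toReal * (P B).toReal| ≤
        θ n * (μ B).toReal)
    (j p : ℕ) (hj : 1 ≤ j) (hp : 1 ≤ p)
    (A : Set Ω) (hA : MeasurableSet[F j] A) :
    ∀ᵐ x ∂P, (Shat^[j + p]) (A.indicator (1 : Ω → ℝ≥0∞)) x ≤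
      P A + ENNReal.ofReal (θ p) * μ.rnDeriv P x :=
  stmt12_general P S hS Shat hSmeas hSdual μ hμP F hF θ hmix j p hj A hA
end

section
/- Under θ_μ-mixing, the dual sums satisfy the a.e. upper bound ∑_{k=1}^n T̂^k 1_Ω ≤ p + a(n) + n θ_μ(p) · dμ/dP a.e. on Ω, for all n, p ≥ 1, where a(n) = ∑_{j=1}^n P([φ_j ≤ n]). -/
open MeasureTheory Filter Topology ENNReal

/-!
Integrated over a test set `s`, duality turns `∑_{k ≤ n} T̂^k 1_Ω` into the expected number of
times `1 ≤ k ≤ n` at which `T^k x` visits `B = s ∩ Ω`. Visits to `B ⊆ Ω` only happen at return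
times, so this is the expected number of `j ≤ n` with `φ_j ≤ n` and `T_Ω^j x ∈ B`. For `j ≤ p` the
`j`-th term has mass at most `P(B)` by Kac's inequality for the induced map. For `j > p` the event
`[φ_j ≤ n]` is contained in `[φ_{j-p} ≤ n] ∈ σ(α_{j-p})`, which precedes time `j` by `p` steps,
so mixing bounds the term by `P(φ_{j-p} ≤ n) P(B) + θ(p) ν(B)`. Summing over `j` gives
`∫_s (p + a(n) + n θ(p) dν/dP) dP`, and a bound on all set integrals is a bound a.e.
-/

/-- The first return time of the set `A` under `T`. -/
noncomputable def firstReturn {X : Type*} (T : X → X) (A : Set X) (x : X) : ℕ :=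
  sInf {n : ℕ | 1 ≤ n ∧ T^[n] x ∈ A}

/-- The induced (first return) map of `T` on `A`. -/
noncomputable def inducedMap {X : Type*} (T : X → X) (A : Set X) (x : X) : X :=
  T^[firstReturn T A x] x

/-- The time of the `j`-th return to `A`. -/
noncomputable def returnSum {X : Type*} (T : X → X) (A : Set X) (j : ℕ) (x : X) : ℕ :=
  ∑ i ∈ Finset.range j, firstReturn T A ((inducedMap T A)^[i] x)


section Returns

variable {X : Type*} {T : X → X} {Ω : Set X}

lemma firstReturn_le {x : X} {m : ℕ} (hm : 1 ≤ m) (hmΩ : T^[m] x ∈ Ω) :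
    firstReturn T Ω x ≤ m :=
  Nat.sInf_le ⟨hm, hmΩ⟩

lemma iterate_notMem_of_lt_firstReturn {x : X} {i : ℕ} (hi : 1 ≤ i)
    (hlt : i < firstReturn T Ω x) : T^[i] x ∉ Ω :=
  fun hiΩ => (firstReturn_le hi hiΩ).not_gt hlt

lemma firstReturn_le_iff {x : X} {k : ℕ} :
    firstReturn T Ω x ≤ k ↔ (∃ i, 1 ≤ i ∧ i ≤ k ∧ T^[i] x ∈ Ω) ∨ ∀ i, 1 ≤ i → T^[i] x ∉ Ω := by
  by_cases hret : ∃ i, 1 ≤ i ∧ T^[i] x ∈ Ω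
  · have hmem := Nat.sInf_mem hret
    refine ⟨fun h => .inl ⟨_, hmem.1, h, hmem.2⟩, ?_⟩
    rintro (⟨i, hi, hik, hiΩ⟩ | hnot)
    · exact (firstReturn_le hi hiΩ).trans hik
    · exact absurd hmem.2 (hnot _ hmem.1)
  · push Not at hret
    have : firstReturn T Ω x = 0 := by
      rw [firstReturn, Nat.sInf_eq_zero]; right; ext i; simpa using hret i
    simpa only [this, zero_le, true_iff] using .inr hret

@[simp]
lemma returnSum_zero (x : X) : returnSum T Ω 0 x = 0 := by
  simp [returnSum]

variable (T Ω) in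
lemma returnSum_succ (j : ℕ) (x : X) :
    returnSum T Ω (j + 1) x = returnSum T Ω j x + firstReturn T Ω ((inducedMap T Ω)^[j] x) :=
  Finset.sum_range_succ _ _

lemma inducedMap_iterate_apply (j : ℕ) (x : X) :
    (inducedMap T Ω)^[j] x = T^[returnSum T Ω j x] x := by
  induction j with
  | zero => simp
  | succ j ih =>
    rw [Function.iterate_succ_apply', ih, returnSum_succ, inducedMap, ih, add_comm,
      Function.iterate_add_apply]

lemma returnSum_mono (x : X) : Monotone (returnSum T Ω · x) :=
  fun _ _ hij => Finset.sum_le_sum_of_subset (Finset.range_subset_range.mpr hij)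

/-- `hitAvoiding T Ω B k` is the set of `x` with `T^[k + 1] x ∈ B` and `T^[i] x ∉ Ω`
for `1 ≤ i ≤ k`. -/
def hitAvoiding (T : X → X) (Ω B : Set X) : ℕ → Set X
  | 0 => T ⁻¹' B
  | k + 1 => T ⁻¹' (hitAvoiding T Ω B k \ Ω)

lemma mem_hitAvoiding {x : X} {k : ℕ} (hB : T^[k + 1] x ∈ B)
    (hΩ : ∀ i, 1 ≤ i → i ≤ k → T^[i] x ∉ Ω) : x ∈ hitAvoiding T Ω B k := by
  induction k generalizing x with
  | zero => exact hB
  | succ k ih =>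
    refine ⟨ih (by rwa [← Function.iterate_succ_apply]) fun i hi hik => ?_, hΩ 1 le_rfl (by omega)⟩
    rw [← Function.iterate_succ_apply]
    exact hΩ (i + 1) (by omega) (by omega)

end Returns

section Measurability

variable {X : Type*} [MeasurableSpace X] {T : X → X} {Ω : Set X}

lemma measurable_firstReturn (hT : Measurable T) (hΩ : MeasurableSet Ω) :
    Measurable (firstReturn T Ω) := by
  refine measurable_of_Iic fun k => ?_
  have hit : ∀ i, Measurable fun x => T^[i] x ∈ Ω := fun i => hΩ.mem.comp (hT.iterate i)
  simp only [Set.preimage, Set.mem_Iic, firstReturn_le_iff]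
  exact Measurable.setOf (by fun_prop)

lemma measurable_inducedMap (hT : Measurable T) (hΩ : MeasurableSet Ω) :
    Measurable (inducedMap T Ω) :=
  (measurable_from_prod_countable_left (f := fun p : X × ℕ => T^[p.2] p.1)
    fun n => hT.iterate n).comp (measurable_id.prodMk (measurable_firstReturn hT hΩ))

lemma measurable_returnSum (hT : Measurable T) (hΩ : MeasurableSet Ω) (j : ℕ) :
    Measurable (returnSum T Ω j) :=
  Finset.measurable_sum _ fun i _ =>
    (measurable_firstReturn hT hΩ).comp ((measurable_inducedMap hT hΩ).iterate i)

end Measurability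

section Recurrence

open Finset

variable {X : Type*} {T : X → X} {Ω : Set X} {x : X}

def IsRecurrent (T : X → X) (Ω : Set X) (x : X) : Prop :=
  x ∈ Ω ∧ ∃ᶠ m in atTop, T^[m] x ∈ Ω

namespace IsRecurrent

lemma firstReturn_spec (hx : IsRecurrent T Ω x) :
    1 ≤ firstReturn T Ω x ∧ inducedMap T Ω x ∈ Ω :=
  Nat.sInf_mem (frequently_atTop.1 hx.2 1)

lemma induced (hx : IsRecurrent T Ω x) : IsRecurrent T Ω (inducedMap T Ω x) := by
  refine ⟨hx.firstReturn_spec.2, frequently_atTop.2 fun a => ?_⟩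
  obtain ⟨m, hm, hmΩ⟩ := frequently_atTop.1 hx.2 (a + firstReturn T Ω x)
  refine ⟨m - firstReturn T Ω x, by omega, ?_⟩
  rwa [inducedMap, ← Function.iterate_add_apply, Nat.sub_add_cancel (by omega)]

lemma iterate_induced (hx : IsRecurrent T Ω x) (j : ℕ) :
    IsRecurrent T Ω ((inducedMap T Ω)^[j] x) := by
  induction j with
  | zero => exact hx
  | succ j ih => rw [Function.iterate_succ_apply']; exact ih.induced

lemma returnSum_strictMono (hx : IsRecurrent T Ω x) : StrictMono (returnSum T Ω · x) :=
  strictMono_nat_of_lt_succ fun j => by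
    have := (hx.iterate_induced j).firstReturn_spec.1
    rw [returnSum_succ]; omega

lemma exists_returnSum_eq (hx : IsRecurrent T Ω x) {k : ℕ} (hk : 1 ≤ k) (hkΩ : T^[k] x ∈ Ω) :
    ∃ j, 1 ≤ j ∧ returnSum T Ω j x = k := by
  classical
  have hex : ∃ J, k < returnSum T Ω J x :=
    ⟨k + 1, (Nat.lt_succ_self k).trans_le (hx.returnSum_strictMono.id_le _)⟩
  rcases hJ : Nat.find hex with _ | j
  · have := hJ ▸ Nat.find_spec hex
    simp at this
  have hjk : returnSum T Ω j x ≤ k := not_lt.1 (Nat.find_min hex (by omega))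
  have hk_lt : k < returnSum T Ω (j + 1) x := hJ ▸ Nat.find_spec hex
  have hj_eq : returnSum T Ω j x = k := by
    by_contra hne
    have hret : T^[k - returnSum T Ω j x] ((inducedMap T Ω)^[j] x) ∈ Ω := by
      rwa [inducedMap_iterate_apply, ← Function.iterate_add_apply, Nat.sub_add_cancel hjk]
    have := firstReturn_le (by omega) hret
    rw [returnSum_succ] at hk_lt
    omega
  refine ⟨j, Nat.one_le_iff_ne_zero.2 fun hj => ?_, hj_eq⟩
  simp only [hj, returnSum_zero] at hj_eq; omega

lemma sum_indicator_iterate_eq (hx : IsRecurrent T Ω x) {B : Set X} (hB : B ⊆ Ω) (n : ℕ) :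
    ∑ k ∈ Icc 1 n, B.indicator (1 : X → ℝ≥0∞) (T^[k] x) =
      ∑ j ∈ Icc 1 n with returnSum T Ω j x ≤ n,
        B.indicator (1 : X → ℝ≥0∞) ((inducedMap T Ω)^[j] x) := by
  classical
  have himage : image (returnSum T Ω · x) {j ∈ Icc 1 n | returnSum T Ω j x ≤ n} =
      {k ∈ Icc 1 n | T^[k] x ∈ Ω} := by
    ext k
    simp only [mem_image, mem_filter, mem_Icc]
    constructor
    · rintro ⟨j, ⟨⟨hj, -⟩, hjn⟩, rfl⟩
      exact ⟨⟨hj.trans (hx.returnSum_strictMono.id_le j), hjn⟩,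
        inducedMap_iterate_apply (T := T) j x ▸ (hx.iterate_induced j).1⟩
    · rintro ⟨⟨hk, hkn⟩, hkΩ⟩
      obtain ⟨j, hj, rfl⟩ := hx.exists_returnSum_eq hk hkΩ
      exact ⟨j, ⟨⟨hj, (hx.returnSum_strictMono.id_le j).trans hkn⟩, hkn⟩, rfl⟩
  rw [← sum_filter_of_ne (p := fun k => T^[k] x ∈ Ω) fun k _ hk => by_contra fun hkΩ =>
      hk (Set.indicator_of_notMem (fun hkB => hkΩ (hB hkB)) _),
    ← himage, sum_image fun i _ j _ hij => hx.returnSum_strictMono.injective hij]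
  simp_rw [inducedMap_iterate_apply]

lemma sum_indicator_iterate_le (hx : IsRecurrent T Ω x) {B : Set X} (hB : B ⊆ Ω) (n p : ℕ) :
    ∑ k ∈ Icc 1 n, B.indicator (1 : X → ℝ≥0∞) (T^[k] x) ≤
      ∑ j ∈ Icc 1 n, (Ω ∩ {y | returnSum T Ω (j - p) y ≤ n} ∩
        (inducedMap T Ω)^[j] ⁻¹' B).indicator 1 x := by
  rw [hx.sum_indicator_iterate_eq hB n, sum_filter]
  refine sum_le_sum fun j _ => ?_
  split_ifs with hj
  · have hjp : returnSum T Ω (j - p) x ≤ n := (returnSum_mono x (Nat.sub_le j p)).trans hj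
    by_cases hjB : (inducedMap T Ω)^[j] x ∈ B <;> simp [hjB, hx.1, hjp]
  · exact zero_le

end IsRecurrent

end Recurrence

section Kac

variable {X : Type*} [MeasurableSpace X] {μ : Measure X} {T : X → X} {Ω B : Set X}

lemma MeasureTheory.Conservative.ae_isRecurrent (hc : Conservative T μ) (hΩ : MeasurableSet Ω) :
    ∀ᵐ x ∂μ, x ∈ Ω → IsRecurrent T Ω x :=
  (hc.ae_mem_imp_frequently_image_mem hΩ.nullMeasurableSet).mono fun _ hx hxΩ => ⟨hxΩ, hx hxΩ⟩

lemma measurableSet_hitAvoiding (hT : Measurable T) (hΩ : MeasurableSet Ω) (hB : MeasurableSet B) :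
    ∀ k, MeasurableSet (hitAvoiding T Ω B k)
  | 0 => hT hB
  | k + 1 => hT ((measurableSet_hitAvoiding hT hΩ hB k).diff hΩ)

lemma measure_hitAvoiding_add_sum (hT : MeasurePreserving T μ μ) (hΩ : MeasurableSet Ω)
    (hB : MeasurableSet B) (K : ℕ) :
    ∑ k ∈ Finset.range K, μ (hitAvoiding T Ω B k ∩ Ω) + μ (hitAvoiding T Ω B K) = μ B := by
  induction K with
  | zero => simpa [hitAvoiding] using hT.measure_preimage hB.nullMeasurableSet
  | succ K ih =>
    have hK := measurableSet_hitAvoiding hT.measurable hΩ hB K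
    rw [Finset.sum_range_succ, add_assoc, hitAvoiding,
      hT.measure_preimage (hK.diff hΩ).nullMeasurableSet, measure_inter_add_sdiff _ hΩ, ih]

lemma restrict_preimage_inducedMap_le (hT : MeasurePreserving T μ μ) (hc : Conservative T μ)
    (hΩ : MeasurableSet Ω) (hB : MeasurableSet B) :
    μ.restrict Ω (inducedMap T Ω ⁻¹' B) ≤ μ.restrict Ω B := by
  rw [Measure.restrict_apply' hΩ, Measure.restrict_apply' hΩ]
  -- Kac's argument: a.e. such `x` first enters `B ∩ Ω` at time `firstReturn T Ω x`, and by
  -- invariance the first-entry sets `hitAvoiding T Ω (B ∩ Ω) k ∩ Ω` have total mass `≤ μ (B ∩ Ω)`.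
  have hcover : (inducedMap T Ω ⁻¹' B ∩ Ω : Set X) ≤ᵐ[μ] ⋃ k, hitAvoiding T Ω (B ∩ Ω) k ∩ Ω := by
    filter_upwards [hc.ae_isRecurrent hΩ] with x hrec ⟨hxB, hxΩ⟩
    obtain ⟨hpos, hSx⟩ := (hrec hxΩ).firstReturn_spec
    refine Set.mem_iUnion.2 ⟨firstReturn T Ω x - 1, mem_hitAvoiding ?_ fun i hi hik => ?_, hxΩ⟩
    · rw [Nat.sub_add_cancel hpos]; exact ⟨hxB, hSx⟩
    · exact iterate_notMem_of_lt_firstReturn hi (by omega)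
  calc μ (inducedMap T Ω ⁻¹' B ∩ Ω) ≤ ∑' k, μ (hitAvoiding T Ω (B ∩ Ω) k ∩ Ω) :=
        (measure_mono_ae hcover).trans (measure_iUnion_le _)
    _ ≤ μ (B ∩ Ω) := ENNReal.tsum_le_of_sum_range_le fun K =>
        le_self_add.trans (measure_hitAvoiding_add_sum hT hΩ (hB.inter hΩ) K).le

lemma restrict_preimage_iterate_inducedMap_le (hT : MeasurePreserving T μ μ)
    (hc : Conservative T μ) (hΩ : MeasurableSet Ω) (hB : MeasurableSet B) (j : ℕ) :
    μ.restrict Ω ((inducedMap T Ω)^[j] ⁻¹' B) ≤ μ.restrict Ω B := by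
  induction j with
  | zero => rfl
  | succ j ih =>
    rw [Function.iterate_succ, Set.preimage_comp]
    exact (restrict_preimage_inducedMap_le hT hc hΩ
      (measurable_inducedMap hT.measurable hΩ |>.iterate j hB)).trans ih

end Kac

section Transfer

variable {X : Type*} [MeasurableSpace X] {μ : Measure X} {T : X → X}
  {L : (X → ℝ≥0∞) → (X → ℝ≥0∞)}

lemma lintegral_comp_iterate_mul_eq (hT : Measurable T)
    (hLmeas : ∀ f, Measurable f → Measurable (L f))
    (hLdual : ∀ f g : X → ℝ≥0∞, Measurable f → Measurable g →
      ∫⁻ x, f (T x) * g x ∂μ = ∫⁻ x, f x * L g x ∂μ)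
    (k : ℕ) {f g : X → ℝ≥0∞} (hf : Measurable f) (hg : Measurable g) :
    ∫⁻ x, f (T^[k] x) * g x ∂μ = ∫⁻ x, f x * L^[k] g x ∂μ := by
  induction k generalizing g with
  | zero => rfl
  | succ k ih =>
    exact (hLdual (fun y => f (T^[k] y)) g (hf.comp (hT.iterate k)) hg).trans (ih (hLmeas g hg))

lemma setLIntegral_iterate_indicator_eq (hT : Measurable T)
    (hLmeas : ∀ f, Measurable f → Measurable (L f))
    (hLdual : ∀ f g : X → ℝ≥0∞, Measurable f → Measurable g →
      ∫⁻ x, f (T x) * g x ∂μ = ∫⁻ x, f x * L g x ∂μ)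
    {Ω s : Set X} (hΩ : MeasurableSet Ω) (hs : MeasurableSet s) (k : ℕ) :
    ∫⁻ x in s, L^[k] (Ω.indicator 1) x ∂μ.restrict Ω = μ.restrict Ω (T^[k] ⁻¹' (s ∩ Ω)) := by
  have hsΩ := hs.inter hΩ
  calc ∫⁻ x in s, L^[k] (Ω.indicator 1) x ∂μ.restrict Ω
      = ∫⁻ x, (s ∩ Ω).indicator 1 x * L^[k] (Ω.indicator 1) x ∂μ := by
        rw [Measure.restrict_restrict hs, ← lintegral_indicator hsΩ]
        congr 1 with x
        by_cases hx : x ∈ s ∩ Ω <;> simp [hx]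
    _ = ∫⁻ x, (s ∩ Ω).indicator 1 (T^[k] x) * Ω.indicator 1 x ∂μ :=
        (lintegral_comp_iterate_mul_eq hT hLmeas hLdual k (measurable_one.indicator hsΩ)
          (measurable_one.indicator hΩ)).symm
    _ = ∫⁻ x in Ω, (s ∩ Ω).indicator 1 (T^[k] x) ∂μ := by
        rw [← lintegral_indicator hΩ]
        congr 1 with x
        by_cases hx : x ∈ Ω <;> simp [hx]
    _ = μ.restrict Ω (T^[k] ⁻¹' (s ∩ Ω)) :=
        (lintegral_indicator_const_comp (hT.iterate k) hsΩ 1).trans (one_mul _)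

end Transfer

section Mixing

variable {X : Type*} [MeasurableSpace X]

def IsThetaMixing (S : X → X) (P ν : Measure X) (F : ℕ → MeasurableSpace X) (θ : ℕ → ℝ) :
    Prop :=
  ∀ (n k : ℕ) (A B : Set X), 1 ≤ k → MeasurableSet[F k] A → MeasurableSet B →
    |(P (A ∩ S^[n + k] ⁻¹' B)).toReal - (P A).toReal * (P B).toReal| ≤ θ n * (ν B).toReal

lemma IsThetaMixing.measure_inter_preimage_le {S : X → X} {P ν : Measure X}
    [IsFiniteMeasure P] [IsFiniteMeasure ν] {F : ℕ → MeasurableSpace X} {θ : ℕ → ℝ}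
    (hmix : IsThetaMixing S P ν F θ) {n k : ℕ} (hθ : 0 ≤ θ n) (hk : 1 ≤ k) {A B : Set X}
    (hA : MeasurableSet[F k] A) (hB : MeasurableSet B) :
    P (A ∩ S^[n + k] ⁻¹' B) ≤ P A * P B + ENNReal.ofReal (θ n) * ν B := by
  have := (abs_le.1 (hmix n k A B hk hA hB)).2
  rw [← ENNReal.toReal_le_toReal (measure_ne_top _ _) (by finiteness), ENNReal.toReal_add
    (by finiteness) (by finiteness), ENNReal.toReal_mul, ENNReal.toReal_mul,
    ENNReal.toReal_ofReal hθ]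
  linarith

end Mixing

lemma Finset.sum_Icc_tsub_le (f : ℕ → ℝ≥0∞) (n p : ℕ) :
    ∑ j ∈ Icc 1 n, f (j - p) ≤ p * f 0 + ∑ i ∈ Icc 1 n, f i := by
  have hhead : ∑ j ∈ Ioc 0 p, f (j - p) = p * f 0 := by
    rw [sum_congr rfl fun j hj => by rw [Nat.sub_eq_zero_of_le (mem_Ioc.1 hj).2], sum_const,
      Nat.card_Ioc, nsmul_eq_mul, Nat.sub_zero]
  have hshift : ∑ j ∈ Ioc p (p + n), f (j - p) = ∑ i ∈ Icc 1 n, f i := by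
    have := map_add_left_Ioc 0 n p
    rw [add_zero] at this
    rw [← this, sum_map, ← Icc_add_one_left_eq_Ioc]
    simp
  calc ∑ j ∈ Icc 1 n, f (j - p) ≤ ∑ j ∈ Ioc 0 (p + n), f (j - p) :=
        sum_le_sum_of_subset fun j => by simp only [mem_Icc, mem_Ioc]; omega
    _ = p * f 0 + ∑ i ∈ Icc 1 n, f i := by
      rw [← sum_Ioc_consecutive _ (Nat.zero_le p) (Nat.le_add_right p n), hhead, hshift]

section Visits

open Finset

variable {X : Type*} [MeasurableSpace X] {μ : Measure X} {T : X → X} {Ω B : Set X}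

lemma sum_restrict_preimage_iterate_le_sum_inter (hT : Measurable T) (hc : Conservative T μ)
    (hΩ : MeasurableSet Ω) (hB : MeasurableSet B) (hBΩ : B ⊆ Ω) (n p : ℕ) :
    ∑ k ∈ Icc 1 n, μ.restrict Ω (T^[k] ⁻¹' B) ≤
      ∑ j ∈ Icc 1 n, μ.restrict Ω (Ω ∩ {y | returnSum T Ω (j - p) y ≤ n} ∩
        (inducedMap T Ω)^[j] ⁻¹' B) := by
  have hA : ∀ j, MeasurableSet (Ω ∩ {y | returnSum T Ω (j - p) y ≤ n} ∩
      (inducedMap T Ω)^[j] ⁻¹' B) := fun j =>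
    (hΩ.inter (measurableSet_le (measurable_returnSum hT hΩ _) measurable_const)).inter
      ((measurable_inducedMap hT hΩ).iterate j hB)
  calc ∑ k ∈ Icc 1 n, μ.restrict Ω (T^[k] ⁻¹' B)
      = ∫⁻ x, ∑ k ∈ Icc 1 n, B.indicator 1 (T^[k] x) ∂μ.restrict Ω := by
        rw [lintegral_finsetSum (f := fun k x => B.indicator 1 (T^[k] x)) _
          fun k _ => (measurable_one.indicator hB).comp (hT.iterate k)]
        exact sum_congr rfl fun k _ =>
          ((lintegral_indicator_const_comp (hT.iterate k) hB 1).trans (one_mul _)).symm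
    _ ≤ ∫⁻ x, ∑ j ∈ Icc 1 n, (Ω ∩ {y | returnSum T Ω (j - p) y ≤ n} ∩
          (inducedMap T Ω)^[j] ⁻¹' B).indicator 1 x ∂μ.restrict Ω := by
        refine lintegral_mono_ae ?_
        filter_upwards [(ae_restrict_iff' hΩ).2 (hc.ae_isRecurrent hΩ)] with x hx
        exact hx.sum_indicator_iterate_le hBΩ n p
    _ = _ := by
        rw [lintegral_finsetSum _ fun j _ => measurable_one.indicator (hA j)]
        exact sum_congr rfl fun j _ => lintegral_indicator_one (hA j)

variable {ν : Measure X} {F : ℕ → MeasurableSpace X} {θ : ℕ → ℝ}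

lemma restrict_inter_preimage_iterate_inducedMap_le [IsProbabilityMeasure (μ.restrict Ω)]
    [IsFiniteMeasure ν] (hT : MeasurePreserving T μ μ) (hc : Conservative T μ)
    (hΩ : MeasurableSet Ω) (hB : MeasurableSet B)
    (hFret : ∀ j n : ℕ, MeasurableSet[F j] (Ω ∩ {x | returnSum T Ω j x ≤ n}))
    (hmix : IsThetaMixing (inducedMap T Ω) (μ.restrict Ω) ν F θ) {p : ℕ} (hθ : 0 ≤ θ p)
    (n j : ℕ) :
    μ.restrict Ω (Ω ∩ {y | returnSum T Ω (j - p) y ≤ n} ∩ (inducedMap T Ω)^[j] ⁻¹' B) ≤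
      μ.restrict Ω (Ω ∩ {y | returnSum T Ω (j - p) y ≤ n}) * μ.restrict Ω B +
        ENNReal.ofReal (θ p) * ν B := by
  rcases le_or_gt j p with hjp | hpj
  -- For `j ≤ p` the truncated `j - p` is `0`, so the event is all of `Ω` and Kac's
  -- inequality does the job of mixing.
  · have hΩ1 : μ.restrict Ω Ω = 1 := by
      rw [Measure.restrict_apply_self, ← Measure.restrict_apply_univ, measure_univ]
    simp only [Nat.sub_eq_zero_of_le hjp, returnSum_zero, zero_le, Set.ofPred_true,
      Set.inter_univ, hΩ1, one_mul]
    exact (measure_mono Set.inter_subset_right).trans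
      ((restrict_preimage_iterate_inducedMap_le hT hc hΩ hB j).trans le_self_add)
  · have := hmix.measure_inter_preimage_le hθ (Nat.sub_pos_of_lt hpj) (hFret (j - p) n) hB
    rwa [Nat.add_sub_cancel' hpj.le] at this

lemma sum_restrict_preimage_iterate_le [IsProbabilityMeasure (μ.restrict Ω)] [IsFiniteMeasure ν]
    (hT : MeasurePreserving T μ μ) (hc : Conservative T μ) (hΩ : MeasurableSet Ω)
    (hFret : ∀ j n : ℕ, MeasurableSet[F j] (Ω ∩ {x | returnSum T Ω j x ≤ n}))
    (hmix : IsThetaMixing (inducedMap T Ω) (μ.restrict Ω) ν F θ) {p : ℕ} (hθ : 0 ≤ θ p)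
    (hB : MeasurableSet B) (hBΩ : B ⊆ Ω) (n : ℕ) :
    ∑ k ∈ Icc 1 n, μ.restrict Ω (T^[k] ⁻¹' B) ≤
      (p + ∑ j ∈ Icc 1 n, μ.restrict Ω {y | returnSum T Ω j y ≤ n}) * μ.restrict Ω B +
        n * ENNReal.ofReal (θ p) * ν B := by
  set A : ℕ → ℝ≥0∞ := fun i => μ.restrict Ω (Ω ∩ {y | returnSum T Ω i y ≤ n})
  have hA : ∀ i, A i = μ.restrict Ω {y | returnSum T Ω i y ≤ n} := fun i => by
    simp only [A, Measure.restrict_apply' hΩ, Set.inter_comm Ω, Set.inter_assoc, Set.inter_self]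
  have hA0 : A 0 = 1 := by simp [hA]
  calc ∑ k ∈ Icc 1 n, μ.restrict Ω (T^[k] ⁻¹' B)
      ≤ ∑ j ∈ Icc 1 n, (A (j - p) * μ.restrict Ω B + ENNReal.ofReal (θ p) * ν B) :=
        (sum_restrict_preimage_iterate_le_sum_inter hT.measurable hc hΩ hB hBΩ n p).trans
          (sum_le_sum fun j _ =>
            restrict_inter_preimage_iterate_inducedMap_le hT hc hΩ hB hFret hmix hθ n j)
    _ = (∑ j ∈ Icc 1 n, A (j - p)) * μ.restrict Ω B + n * ENNReal.ofReal (θ p) * ν B := by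
        rw [sum_add_distrib, ← sum_mul, sum_const, Nat.card_Icc, nsmul_eq_mul, mul_assoc,
          Nat.add_sub_cancel]
    _ ≤ _ := by
        gcongr
        simpa only [hA0, mul_one, hA] using sum_Icc_tsub_le A n p

end Visits

lemma setLIntegral_const_add_mul_rnDeriv {X : Type*} [MeasurableSpace X] {P ν : Measure X}
    [ν.HaveLebesgueDecomposition P] [SFinite P] (hνP : ν ≪ P) (a c : ℝ≥0∞) (s : Set X) :
    ∫⁻ x in s, (a + c * ν.rnDeriv P x) ∂P = a * P s + c * ν s := by
  rw [lintegral_add_left measurable_const, setLIntegral_const,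
    lintegral_const_mul _ (Measure.measurable_rnDeriv _ _), Measure.setLIntegral_rnDeriv hνP]

theorem stmt13_general {X : Type*} [MeasurableSpace X] (μ : Measure X)
    (T : X → X) (hc : Conservative T μ) (herg : Ergodic T μ)
    (Phat : (X → ℝ≥0∞) → (X → ℝ≥0∞))
    (hPmeas : ∀ f, Measurable f → Measurable (Phat f))
    (hPdual : ∀ f g : X → ℝ≥0∞, Measurable f → Measurable g →
      ∫⁻ x, f (T x) * g x ∂μ = ∫⁻ x, f x * Phat g x ∂μ)
    (Ω : Set X) (hΩ : MeasurableSet Ω) (h1 : μ Ω = 1)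
    -- `F j` plays the role of `σ(α_j)`; the return sums are `σ(α_j)`-measurable
    (F : ℕ → MeasurableSpace X)
    (hFret : ∀ j n : ℕ, MeasurableSet[F j] (Ω ∩ {x | returnSum T Ω j x ≤ n}))
    -- `ν` plays the role of `μ ∼ m_Ω` in the mixing coefficient
    (ν : Measure X) [IsProbabilityMeasure ν]
    (hνP : ν ≪ μ.restrict Ω)
    (θ : ℕ → ℝ) (hθ : ∀ n, 0 ≤ θ n)
    (hmix : ∀ (n k : ℕ) (A B : Set X), 1 ≤ k → MeasurableSet[F k] A → MeasurableSet B →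
      |((μ.restrict Ω) (A ∩ (inducedMap T Ω)^[n + k] ⁻¹' B)).toReal -
          ((μ.restrict Ω) A).toReal * ((μ.restrict Ω) B).toReal| ≤ θ n * (ν B).toReal) :
    ∀ n p : ℕ, 1 ≤ n → 1 ≤ p →
      ∀ᵐ x ∂(μ.restrict Ω),
        ∑ k ∈ Finset.Icc 1 n, (Phat^[k]) (Ω.indicator (1 : X → ℝ≥0∞)) x ≤
          (p : ℝ≥0∞) +
            (∑ j ∈ Finset.Icc 1 n, (μ.restrict Ω) {y | returnSum T Ω j y ≤ n}) +
            (n : ℝ≥0∞) * ENNReal.ofReal (θ p) * ν.rnDeriv (μ.restrict Ω) x := by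
  intro n p _ _
  have hT := herg.toMeasurePreserving
  have : IsProbabilityMeasure (μ.restrict Ω) := ⟨by rw [Measure.restrict_apply_univ, h1]⟩
  have hPk : ∀ k, Measurable (Phat^[k] (Ω.indicator 1)) := fun k =>
    Function.Iterate.rec _ (measurable_one.indicator hΩ) hPmeas k
  refine ae_le_of_forall_setLIntegral_le_of_sigmaFinite
    (Finset.measurable_sum _ fun k _ => hPk k) fun s hs _ => ?_
  rw [lintegral_finsetSum _ fun k _ => hPk k, setLIntegral_const_add_mul_rnDeriv hνP]
  simp_rw [setLIntegral_iterate_indicator_eq hT.measurable hPmeas hPdual hΩ hs]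
  calc _ ≤ _ := sum_restrict_preimage_iterate_le hT hc hΩ hFret hmix (hθ p) (hs.inter hΩ)
        Set.inter_subset_right n
    _ ≤ _ := by gcongr <;> exact Set.inter_subset_left

/-- Under `θ_μ`-mixing of the induced system on `Ω`, the dual sums satisfy
`∑_{k=1}^n T̂^k 1_Ω ≤ p + a(n) + n θ_μ(p) dμ/dP` a.e. on `Ω`, where
`a(n) = ∑_{j=1}^n P([φ_j ≤ n])` and `P = m|_Ω`. -/
theorem stmt13 {X : Type*} [MeasurableSpace X] (μ : Measure X) [SigmaFinite μ]
    (T : X → X) (hc : Conservative T μ) (herg : Ergodic T μ)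
    (Phat : (X → ℝ≥0∞) → (X → ℝ≥0∞))
    (hPmeas : ∀ f, Measurable f → Measurable (Phat f))
    (hPdual : ∀ f g : X → ℝ≥0∞, Measurable f → Measurable g →
      ∫⁻ x, f (T x) * g x ∂μ = ∫⁻ x, f x * Phat g x ∂μ)
    (Ω : Set X) (hΩ : MeasurableSet Ω) (h1 : μ Ω = 1)
    -- the induced system and its transfer operator w.r.t. `P = μ|_Ω`
    (Shat : (X → ℝ≥0∞) → (X → ℝ≥0∞))
    (hSmeas : ∀ f, Measurable f → Measurable (Shat f))
    (hSdual : ∀ f g : X → ℝ≥0∞, Measurable f → Measurable g →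
      ∫⁻ x, f (inducedMap T Ω x) * g x ∂(μ.restrict Ω) =
        ∫⁻ x, f x * Shat g x ∂(μ.restrict Ω))
    -- `F j` plays the role of `σ(α_j)`; the return sums are `σ(α_j)`-measurable
    (F : ℕ → MeasurableSpace X) (hF : ∀ k, F k ≤ ‹MeasurableSpace X›)
    (hFret : ∀ j n : ℕ, MeasurableSet[F j] (Ω ∩ {x | returnSum T Ω j x ≤ n}))
    -- `ν` plays the role of `μ ∼ m_Ω` in the mixing coefficient
    (ν : Measure X) [IsProbabilityMeasure ν]
    (hνP : ν ≪ μ.restrict Ω) (hPν : μ.restrict Ω ≪ ν)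
    (θ : ℕ → ℝ) (hθ : ∀ n, 0 ≤ θ n)
    (hmix : ∀ (n k : ℕ) (A B : Set X), 1 ≤ k → MeasurableSet[F k] A → MeasurableSet B →
      |((μ.restrict Ω) (A ∩ (inducedMap T Ω)^[n + k] ⁻¹' B)).toReal -
          ((μ.restrict Ω) A).toReal * ((μ.restrict Ω) B).toReal| ≤ θ n * (ν B).toReal) :
    ∀ n p : ℕ, 1 ≤ n → 1 ≤ p →
      ∀ᵐ x ∂(μ.restrict Ω),
        ∑ k ∈ Finset.Icc 1 n, (Phat^[k]) (Ω.indicator (1 : X → ℝ≥0∞)) x ≤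
          (p : ℝ≥0∞) +
            (∑ j ∈ Finset.Icc 1 n, (μ.restrict Ω) {y | returnSum T Ω j y ≤ n}) +
            (n : ℝ≥0∞) * ENNReal.ofReal (θ p) * ν.rnDeriv (μ.restrict Ω) x :=
  stmt13_general μ T hc herg Phat hPmeas hPdual Ω hΩ h1 F hFret ν hνP θ hθ hmix
end

section
/- If A is a limited set for a weakly pointwise dual ergodic transformation T, then a_n(T) ∼ a_n(A), where a_n(A) := ∑_{k=0}^{n−1} m(A ∩ T^{−k}A)/m(A)², and consequently the Laplace sums satisfy u_A(λ) ∼ u_B(λ) as λ ↓ 0 for any B ⊆ A of finite positive measure. -/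
/-!
By duality, `∫_B ∑_{k<n} T̂ᵏ 1_B dm = ∑_{k<n} m(B ∩ T⁻ᵏB)`. For `B ⊆ A`, the normalised sums
`(1/aₙ) ∑_{k<n} T̂ᵏ 1_B` converge in `m_B`-measure to `m(B)` by weak pointwise dual ergodicity, and
they are eventually bounded on `B` by `m(A) + 1` because `T̂` is positive and `A` is limited.
Bounded convergence gives `∑_{k<n} m(B ∩ T⁻ᵏB) ∼ aₙ m(B)²`, i.e. `aₙ(B) ∼ aₙ`, so `aₙ(A) ∼ aₙ(B)`.
Conservativity makes these sums diverge, and the Abelian theorem for power series, evaluated at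
`r = e^{-λ}`, turns `aₙ(A) ∼ aₙ(B)` into `u_A(λ) ∼ u_B(λ)`.
-/

open MeasureTheory Filter Topology ENNReal

open Asymptotics

theorem setLIntegral_eq_lintegral_indicator_one_mul {X : Type*} [MeasurableSpace X]
    {μ : Measure X} {s : Set X} (hs : MeasurableSet s) (f : X → ℝ≥0∞) :
    ∫⁻ x in s, f x ∂μ = ∫⁻ x, s.indicator 1 x * f x ∂μ := by
  rw [← lintegral_indicator hs]
  congr with x
  by_cases hx : x ∈ s <;> simp [hx]

structure IsTransferOperator_s16 {X : Type*} [MeasurableSpace X] (μ : Measure X) (T : X → X)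
    (P : (X → ℝ≥0∞) → X → ℝ≥0∞) : Prop where
  measurable : ∀ f, Measurable f → Measurable (P f)
  lintegral_comp_mul : ∀ f g, Measurable f → Measurable g →
    ∫⁻ x, f (T x) * g x ∂μ = ∫⁻ x, f x * P g x ∂μ

namespace IsTransferOperator_s16

variable {X : Type*} [MeasurableSpace X] {μ : Measure X} {T : X → X}
  {P : (X → ℝ≥0∞) → X → ℝ≥0∞}

theorem iterate (hP : IsTransferOperator_s16 μ T P) (hT : Measurable T) (k : ℕ) :
    IsTransferOperator_s16 μ T^[k] P^[k] := by
  induction k with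
  | zero => exact ⟨fun _ hf => hf, fun _ _ _ _ => rfl⟩
  | succ k ih =>
    refine ⟨fun f hf => ih.measurable _ (hP.measurable f hf), fun f g hf hg => ?_⟩
    exact (hP.lintegral_comp_mul (f ∘ T^[k]) g (hf.comp (hT.iterate k)) hg).trans
      (ih.lintegral_comp_mul f (P g) hf (hP.measurable g hg))

theorem measure_inter_preimage (hP : IsTransferOperator_s16 μ T P) (hT : Measurable T)
    {B C : Set X} (hB : MeasurableSet B) (hC : MeasurableSet C) :
    μ (B ∩ T ⁻¹' C) = ∫⁻ x in C, P (B.indicator 1) x ∂μ := by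
  have hind : ∀ x, C.indicator (1 : X → ℝ≥0∞) (T x) * B.indicator 1 x =
      (B ∩ T ⁻¹' C).indicator 1 x := by
    intro x
    by_cases hxB : x ∈ B <;> by_cases hxC : T x ∈ C <;> simp [hxB, hxC]
  rw [setLIntegral_eq_lintegral_indicator_one_mul hC, ← hP.lintegral_comp_mul _ _
    (measurable_one.indicator hC) (measurable_one.indicator hB), lintegral_congr hind,
    lintegral_indicator_one (hB.inter (hT hC))]

theorem ae_mono [SigmaFinite μ] (hP : IsTransferOperator_s16 μ T P) {f g : X → ℝ≥0∞}
    (hf : Measurable f) (hg : Measurable g) (hfg : f ≤ᵐ[μ] g) : P f ≤ᵐ[μ] P g := by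
  refine ae_le_of_forall_setLIntegral_le_of_sigmaFinite (hP.measurable f hf) fun s hs _ => ?_
  have hs1 : Measurable (s.indicator (1 : X → ℝ≥0∞)) := measurable_one.indicator hs
  simp only [setLIntegral_eq_lintegral_indicator_one_mul hs, ← hP.lintegral_comp_mul _ _ hs1 hf,
    ← hP.lintegral_comp_mul _ _ hs1 hg]
  exact lintegral_mono_ae (hfg.mono fun x hx => mul_le_mul_right hx _)

end IsTransferOperator_s16

theorem MeasureTheory.TendstoInMeasure.tendsto_integral_of_ae_bound {α E : Type*}
    [MeasurableSpace α] {μ : Measure α} [IsFiniteMeasure μ] [NormedAddCommGroup E]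
    [NormedSpace ℝ E] {f : ℕ → α → E} {g : α → E} {C : ℝ}
    (hfg : TendstoInMeasure μ f atTop g) (hf : ∀ n, AEStronglyMeasurable (f n) μ)
    (hbound : ∀ᶠ n in atTop, ∀ᵐ x ∂μ, ‖f n x‖ ≤ C) :
    Tendsto (fun n => ∫ x, f n x ∂μ) atTop (𝓝 (∫ x, g x ∂μ)) := by
  refine tendsto_of_subseq_tendsto fun ns hns => ?_
  obtain ⟨ms, hms, hlim⟩ := (hfg.comp hns).exists_seq_tendsto_ae
  exact ⟨ms, tendsto_integral_filter_of_dominated_convergence (fun _ => C)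
    (Eventually.of_forall fun _ => hf _) ((hns.comp hms.tendsto_atTop).eventually hbound)
    (integrable_const C) hlim⟩

theorem ENNReal.tendsto_sum_range_toReal_atTop {f : ℕ → ℝ≥0∞} (hf : ∀ n, f n ≠ ∞)
    (hsum : ∑' n, f n = ∞) :
    Tendsto (fun n => ∑ k ∈ Finset.range n, (f k).toReal) atTop atTop := by
  refine (not_summable_iff_tendsto_nat_atTop_of_nonneg fun _ => toReal_nonneg).mp fun h => ?_
  rw [← tsum_congr fun n => ofReal_toReal (hf n), ← ofReal_tsum_of_nonneg
    (fun _ => toReal_nonneg) h] at hsum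
  exact ofReal_ne_top hsum

theorem MeasureTheory.Conservative.tsum_measure_inter_preimage_iterate_eq_top {X : Type*}
    [MeasurableSpace X] {μ : Measure X} {f : X → X} {s : Set X} (hf : Conservative f μ)
    (hs : MeasurableSet s) (h0 : μ s ≠ 0) :
    ∑' n, μ (s ∩ f^[n] ⁻¹' s) = ∞ := by
  have hterm : ∀ n, μ (s ∩ f^[n] ⁻¹' s) = ∫⁻ x in s, s.indicator 1 (f^[n] x) ∂μ := by
    intro n
    simp_rw [← Set.indicator_comp_right (f^[n]), Pi.one_comp]
    rw [lintegral_indicator_one ((hf.measurable.iterate n) hs),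
      Measure.restrict_apply ((hf.measurable.iterate n) hs), Set.inter_comm]
  have hret : ∀ᵐ x ∂μ.restrict s, ∑' n, s.indicator (1 : X → ℝ≥0∞) (f^[n] x) = ∞ := by
    rw [ae_restrict_iff' hs]
    filter_upwards [hf.ae_mem_imp_frequently_image_mem hs.nullMeasurableSet] with x hx hxs
    by_contra h
    obtain ⟨n, hn, hlt⟩ := ((hx hxs).and_eventually
      ((ENNReal.tendsto_atTop_zero_of_tsum_ne_top h).eventually_lt_const one_pos)).exists
    simp [hn] at hlt
  rw [tsum_congr hterm, ← lintegral_tsum (f := fun n x => s.indicator 1 (f^[n] x)) fun n =>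
    ((measurable_one.indicator hs).comp (hf.measurable.iterate n)).aemeasurable,
    lintegral_congr_ae hret, setLIntegral_const, top_mul h0]

section Correlations

variable {X : Type*} [MeasurableSpace X] {μ : Measure X} {T : X → X}
  {P : (X → ℝ≥0∞) → X → ℝ≥0∞}

theorem tendsto_sum_measure_inter_preimage_iterate_div (hP : IsTransferOperator_s16 μ T P)
    (hT : Measurable T) {B : Set X} (hB : MeasurableSet B) (hBfin : μ B ≠ ∞) {a : ℕ → ℝ}
    (ha : ∀ n, 0 ≤ a n) {C : ℝ}
    (hconv : TendstoInMeasure (μ.restrict B)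
      (fun n x => (∑ k ∈ Finset.range n, (P^[k]) (B.indicator 1) x).toReal / a n) atTop
      fun _ => (μ B).toReal)
    (hbound : ∀ᶠ n in atTop, ∀ᵐ x ∂μ.restrict B,
      (∑ k ∈ Finset.range n, (P^[k]) (B.indicator 1) x).toReal / a n ≤ C) :
    Tendsto (fun n => (∑ k ∈ Finset.range n, (μ (B ∩ T^[k] ⁻¹' B)).toReal) / a n) atTop
      (𝓝 ((μ B).toReal ^ 2)) := by
  have : IsFiniteMeasure (μ.restrict B) := isFiniteMeasure_restrict.mpr hBfin
  set S : ℕ → X → ℝ≥0∞ := fun n x => ∑ k ∈ Finset.range n, (P^[k]) (B.indicator 1) x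
  have hmeas : ∀ k, Measurable ((P^[k]) (B.indicator 1)) := fun k =>
    (hP.iterate hT k).measurable _ (measurable_one.indicator hB)
  have hSmeas : ∀ n, Measurable (S n) := fun n => Finset.measurable_sum _ fun k _ => hmeas k
  have hlint : ∀ n, ∫⁻ x in B, S n x ∂μ = ∑ k ∈ Finset.range n, μ (B ∩ T^[k] ⁻¹' B) := by
    intro n
    rw [lintegral_finsetSum _ fun k _ => hmeas k]
    exact Finset.sum_congr rfl fun k _ =>
      ((hP.iterate hT k).measure_inter_preimage (hT.iterate k) hB hB).symm
  have hfin : ∀ n, ∑ k ∈ Finset.range n, μ (B ∩ T^[k] ⁻¹' B) ≠ ∞ := fun n =>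
    ENNReal.sum_ne_top.mpr fun k _ => measure_ne_top_of_subset Set.inter_subset_left hBfin
  have hint : ∀ n, ∫ x in B, (S n x).toReal / a n ∂μ =
      (∑ k ∈ Finset.range n, (μ (B ∩ T^[k] ⁻¹' B)).toReal) / a n := by
    intro n
    rw [integral_div, integral_toReal (hSmeas n).aemeasurable
      (ae_lt_top (hSmeas n) (hlint n ▸ hfin n)), hlint, ENNReal.toReal_sum fun k _ =>
        measure_ne_top_of_subset Set.inter_subset_left hBfin]
  have hlim := hconv.tendsto_integral_of_ae_bound
    (fun n => ((hSmeas n).ennreal_toReal.div_const _).aestronglyMeasurable)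
    (hbound.mono fun n h => h.mono fun x hx => by
      rwa [Real.norm_of_nonneg (div_nonneg toReal_nonneg (ha n))])
  rwa [setIntegral_const, smul_eq_mul, measureReal_def, ← sq, funext hint] at hlim

theorem ae_sum_iterate_indicator_div_le_of_essSup [SigmaFinite μ] (hP : IsTransferOperator_s16 μ T P)
    (hT : Measurable T) {A B : Set X} (hA : MeasurableSet A) (hB : MeasurableSet B)
    (hBA : B ⊆ A) (hAfin : μ A ≠ ∞) {a : ℕ → ℝ} (ha : ∀ n, 0 < a n)
    (hsup : Tendsto (fun n => essSup (fun x => (∑ k ∈ Finset.range n,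
        (P^[k]) (A.indicator 1) x) / ENNReal.ofReal (a n)) (μ.restrict A)) atTop (𝓝 (μ A))) :
    ∀ᶠ n in atTop, ∀ᵐ x ∂μ.restrict B,
      (∑ k ∈ Finset.range n, (P^[k]) (B.indicator 1) x).toReal / a n ≤ (μ A).toReal + 1 := by
  have hmono : ∀ᵐ x ∂μ, ∀ k, (P^[k]) (B.indicator 1) x ≤ (P^[k]) (A.indicator 1) x :=
    ae_all_iff.mpr fun k => (hP.iterate hT k).ae_mono (measurable_one.indicator hB)
      (measurable_one.indicator hA) (Eventually.of_forall
        (Set.indicator_le_indicator_of_subset hBA fun _ => zero_le))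
  filter_upwards [hsup.eventually_lt_const (ENNReal.lt_add_right hAfin one_ne_zero)] with n hn
  filter_upwards [ae_restrict_of_ae hmono, ae_mono (Measure.restrict_mono hBA le_rfl)
    (ae_le_essSup _)] with x hBA' hA'
  have hle := ENNReal.toReal_mono (ENNReal.add_ne_top.mpr ⟨hAfin, one_ne_top⟩)
    ((ENNReal.div_le_div_right (Finset.sum_le_sum fun k _ => hBA' k) _).trans (hA'.trans hn.le))
  rwa [ENNReal.toReal_div, toReal_ofReal (ha n).le, ENNReal.toReal_add hAfin one_ne_top,
    ENNReal.toReal_one] at hle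

-- `∑_{k<n} normalizedCorrelation μ T A k` is the paper's `aₙ(A)`.
noncomputable def normalizedCorrelation (μ : Measure X) (T : X → X) (A : Set X) (k : ℕ) : ℝ :=
  (μ (A ∩ T^[k] ⁻¹' A)).toReal / (μ A).toReal ^ 2

variable {A B : Set X}

theorem normalizedCorrelation_nonneg (k : ℕ) : 0 ≤ normalizedCorrelation μ T A k := by
  unfold normalizedCorrelation
  positivity

theorem normalizedCorrelation_le (hA : μ A ≠ ∞) (k : ℕ) :
    normalizedCorrelation μ T A k ≤ (μ A).toReal / (μ A).toReal ^ 2 :=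
  div_le_div_of_nonneg_right (toReal_mono hA (measure_mono Set.inter_subset_left)) (sq_nonneg _)

theorem tendsto_sum_normalizedCorrelation_atTop (hc : Conservative T μ) (hA : MeasurableSet A)
    (h0 : 0 < μ A) (hfin : μ A ≠ ∞) :
    Tendsto (fun n => ∑ k ∈ Finset.range n, normalizedCorrelation μ T A k) atTop atTop := by
  simp only [normalizedCorrelation, ← Finset.sum_div]
  exact (ENNReal.tendsto_sum_range_toReal_atTop
    (fun k => measure_ne_top_of_subset Set.inter_subset_left hfin)
    (hc.tsum_measure_inter_preimage_iterate_eq_top hA h0.ne')).atTop_div_const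
    (pow_pos (toReal_pos h0.ne' hfin) 2)

theorem tendsto_sum_normalizedCorrelation_div [SigmaFinite μ] (hP : IsTransferOperator_s16 μ T P)
    (hT : Measurable T) (hA : MeasurableSet A) (hB : MeasurableSet B) (hBA : B ⊆ A)
    (hAfin : μ A ≠ ∞) (hB0 : 0 < μ B) {a : ℕ → ℝ} (ha : ∀ n, 0 < a n)
    (hconv : TendstoInMeasure (μ.restrict B)
      (fun n x => (∑ k ∈ Finset.range n, (P^[k]) (B.indicator 1) x).toReal / a n) atTop
      fun _ => (μ B).toReal)
    (hsup : Tendsto (fun n => essSup (fun x => (∑ k ∈ Finset.range n,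
        (P^[k]) (A.indicator 1) x) / ENNReal.ofReal (a n)) (μ.restrict A)) atTop (𝓝 (μ A))) :
    Tendsto (fun n => (∑ k ∈ Finset.range n, normalizedCorrelation μ T B k) / a n) atTop
      (𝓝 1) := by
  have hBfin := measure_ne_top_of_subset hBA hAfin
  have h := (tendsto_sum_measure_inter_preimage_iterate_div hP hT hB hBfin (fun n => (ha n).le)
    hconv (ae_sum_iterate_indicator_div_le_of_essSup hP hT hA hB hBA hAfin ha hsup)).div_const
    ((μ B).toReal ^ 2)
  rw [div_self (pow_ne_zero 2 (toReal_pos hB0.ne' hBfin).ne')] at h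
  refine h.congr fun n => ?_
  simp only [normalizedCorrelation, ← Finset.sum_div, div_right_comm]

end Correlations

section Abelian

open Finset

theorem hasSum_pow_mul_sum_range_succ {r : ℝ} (hr0 : 0 ≤ r) (hr1 : r < 1) {w : ℕ → ℝ}
    (hw : Summable fun n => r ^ n * w n) :
    HasSum (fun n => r ^ n * ∑ k ∈ range (n + 1), w k) ((1 - r)⁻¹ * ∑' n, r ^ n * w n) := by
  have hgeom : Summable fun n => ‖r ^ n‖ := by
    simpa [abs_of_nonneg hr0] using summable_geometric_of_lt_one hr0 hr1
  have hw' : Summable fun n => ‖r ^ n * w n‖ := hw.abs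
  have hcauchy : ∀ n, ∑ k ∈ range (n + 1), r ^ k * w k * r ^ (n - k) =
      r ^ n * ∑ k ∈ range (n + 1), w k := by
    intro n
    rw [mul_sum]
    refine sum_congr rfl fun k hk => ?_
    rw [mul_right_comm, pow_mul_pow_sub r (Nat.lt_succ_iff.mp (mem_range.mp hk))]
  have hsum := (summable_sum_mul_range_of_summable_norm' hw' hw hgeom
    (summable_geometric_of_lt_one hr0 hr1)).hasSum
  rwa [← tsum_mul_tsum_eq_tsum_sum_range_of_summable_norm hw' hgeom, tsum_geometric_of_lt_one
    hr0 hr1, mul_comm, funext hcauchy] at hsum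

theorem tendsto_tsum_pow_mul_atTop {G : ℕ → ℝ} (hG0 : ∀ n, 0 ≤ G n)
    (hG : Tendsto G atTop atTop) (hsum : ∀ r, 0 ≤ r → r < 1 → Summable fun n => r ^ n * G n) :
    Tendsto (fun r => ∑' n, r ^ n * G n) (𝓝[<] 1) atTop := by
  refine tendsto_atTop.2 fun b => ?_
  obtain ⟨N, hN⟩ := (hG.eventually_gt_atTop b).exists
  have hcont : Tendsto (fun r : ℝ => r ^ N * G N) (𝓝[<] 1) (𝓝 (G N)) := by
    have : Continuous fun r : ℝ => r ^ N * G N := by fun_prop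
    simpa using (this.tendsto 1).mono_left nhdsWithin_le_nhds
  filter_upwards [hcont.eventually_const_le hN, Ioo_mem_nhdsLT zero_lt_one] with r hr hr01
  exact hr.trans ((hsum r hr01.1.le hr01.2).le_tsum N fun n _ =>
    mul_nonneg (pow_nonneg hr01.1.le n) (hG0 n))

theorem norm_tsum_pow_mul_sub_le {F G : ℕ → ℝ} {r ε : ℝ} {N : ℕ} (hr0 : 0 ≤ r) (hr1 : r ≤ 1)
    (hε : 0 ≤ ε) (hG0 : ∀ n, 0 ≤ G n) (hN : ∀ n, N ≤ n → ‖F n - G n‖ ≤ ε * G n)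
    (hF : Summable fun n => r ^ n * F n) (hG : Summable fun n => r ^ n * G n) :
    ‖∑' n, r ^ n * (F n - G n)‖ ≤ ∑ n ∈ range N, ‖F n - G n‖ + ε * ∑' n, r ^ n * G n := by
  set head : ℕ → ℝ := (range N : Set ℕ).indicator fun n => ‖F n - G n‖
  have hhead : ∀ n ∉ range N, head n = 0 := fun n hn => Set.indicator_of_notMem hn _
  have hterm : ∀ n, ‖r ^ n * (F n - G n)‖ ≤ head n + ε * (r ^ n * G n) := by
    intro n
    have hrn : ‖r ^ n‖ ≤ 1 := by
      rw [norm_pow, Real.norm_of_nonneg hr0]; exact pow_le_one₀ hr0 hr1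
    rw [norm_mul]
    by_cases hn : n ∈ range N
    · have := mul_nonneg hε (mul_nonneg (pow_nonneg hr0 n) (hG0 n))
      have : head n = ‖F n - G n‖ := Set.indicator_of_mem hn _
      linarith [mul_le_of_le_one_left (norm_nonneg (F n - G n)) hrn]
    · rw [hhead n hn, zero_add, Real.norm_of_nonneg (pow_nonneg hr0 n), mul_left_comm]
      exact mul_le_mul_of_nonneg_left (hN n (by simpa using hn)) (pow_nonneg hr0 n)
  have hFG : Summable fun n => ‖r ^ n * (F n - G n)‖ := by
    simpa only [mul_sub] using (hF.sub hG).norm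
  calc ‖∑' n, r ^ n * (F n - G n)‖ ≤ ∑' n, ‖r ^ n * (F n - G n)‖ := norm_tsum_le_tsum_norm hFG
    _ ≤ ∑' n, (head n + ε * (r ^ n * G n)) :=
        hFG.tsum_le_tsum hterm ((summable_of_ne_finset_zero hhead).add (hG.mul_left _))
    _ = ∑ n ∈ range N, ‖F n - G n‖ + ε * ∑' n, r ^ n * G n := by
        rw [(summable_of_ne_finset_zero hhead).tsum_add (hG.mul_left _), tsum_mul_left,
          tsum_eq_sum hhead, sum_congr rfl fun n hn => Set.indicator_of_mem hn _]

theorem Asymptotics.IsEquivalent.tsum_pow_mul {F G : ℕ → ℝ} (hFG : F ~[atTop] G)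
    (hG0 : ∀ n, 0 ≤ G n) (hG : Tendsto G atTop atTop)
    (hsum : ∀ r, 0 ≤ r → r < 1 → Summable fun n => r ^ n * G n) :
    (fun r => ∑' n, r ^ n * F n) ~[𝓝[<] 1] fun r => ∑' n, r ^ n * G n := by
  have hsumF : ∀ r, 0 ≤ r → r < 1 → Summable fun n => r ^ n * F n := fun r h0 h1 =>
    summable_of_isBigO_nat (hsum r h0 h1) ((isBigO_refl _ _).mul hFG.isBigO)
  refine IsLittleO.congr' (f₁ := fun r => ∑' n, r ^ n * (F n - G n)) ?_ ?_ EventuallyEq.rfl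
  swap
  · filter_upwards [Ioo_mem_nhdsLT zero_lt_one] with r hr
    simp only [mul_sub, Pi.sub_apply]
    exact (hsumF r hr.1.le hr.2).tsum_sub (hsum r hr.1.le hr.2)
  refine isLittleO_iff.mpr fun c hc => ?_
  obtain ⟨N, hN⟩ := (isLittleO_iff.mp hFG.isLittleO (half_pos hc)).exists_forall_of_atTop
  -- The first `N` terms are bounded uniformly in `r`, hence negligible as `∑ rⁿ G n → ∞`.
  filter_upwards [(tendsto_tsum_pow_mul_atTop hG0 hG hsum).eventually_ge_atTop
    (2 / c * ∑ n ∈ range N, ‖F n - G n‖), Ioo_mem_nhdsLT zero_lt_one] with r hbig hr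
  have hbound := norm_tsum_pow_mul_sub_le hr.1.le hr.2.le (half_pos hc).le hG0
    (fun n hn => by simpa [Real.norm_of_nonneg (hG0 n)] using hN n hn) (hsumF r hr.1.le hr.2)
    (hsum r hr.1.le hr.2)
  rw [Real.norm_of_nonneg (tsum_nonneg fun n => mul_nonneg (pow_nonneg hr.1.le n) (hG0 n))]
  rw [div_mul_eq_mul_div, div_le_iff₀ hc] at hbig
  linarith

theorem tendsto_tsum_pow_mul_div_of_isEquivalent {u v : ℕ → ℝ} (hv0 : ∀ n, 0 ≤ v n)
    (hsu : ∀ r, 0 ≤ r → r < 1 → Summable fun n => r ^ n * u n)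
    (hsv : ∀ r, 0 ≤ r → r < 1 → Summable fun n => r ^ n * v n)
    (huv : (fun n => ∑ k ∈ range n, u k) ~[atTop] fun n => ∑ k ∈ range n, v k)
    (hV : Tendsto (fun n => ∑ k ∈ range n, v k) atTop atTop) :
    Tendsto (fun r => (∑' n, r ^ n * u n) / ∑' n, r ^ n * v n) (𝓝[<] 1) (𝓝 1) := by
  have hV0 : ∀ n, 0 ≤ ∑ k ∈ range (n + 1), v k := fun n => sum_nonneg fun k _ => hv0 k
  have hVtop : Tendsto (fun n => ∑ k ∈ range (n + 1), v k) atTop atTop :=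
    hV.comp (tendsto_add_atTop_nat 1)
  have hsV : ∀ r, 0 ≤ r → r < 1 → Summable fun n => r ^ n * ∑ k ∈ range (n + 1), v k :=
    fun r h0 h1 => (hasSum_pow_mul_sum_range_succ h0 h1 (hsv r h0 h1)).summable
  have hequiv := (huv.comp_tendsto (tendsto_add_atTop_nat 1)).tsum_pow_mul hV0 hVtop hsV
  have hlim := (isEquivalent_iff_tendsto_one
    ((tendsto_tsum_pow_mul_atTop hV0 hVtop hsV).eventually_ne_atTop 0)).mp hequiv
  refine hlim.congr' ?_
  filter_upwards [Ioo_mem_nhdsLT zero_lt_one] with r hr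
  simp only [Pi.div_apply, Function.comp_apply]
  rw [(hasSum_pow_mul_sum_range_succ hr.1.le hr.2 (hsu r hr.1.le hr.2)).tsum_eq,
    (hasSum_pow_mul_sum_range_succ hr.1.le hr.2 (hsv r hr.1.le hr.2)).tsum_eq,
    mul_div_mul_left _ _ (inv_ne_zero (sub_ne_zero.mpr hr.2.ne'))]

theorem summable_pow_mul_of_abs_le {r : ℝ} (hr0 : 0 ≤ r) (hr1 : r < 1) {w : ℕ → ℝ} {C : ℝ}
    (hw : ∀ n, |w n| ≤ C) : Summable fun n => r ^ n * w n :=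
  .of_norm_bounded ((summable_geometric_of_lt_one hr0 hr1).mul_right C) fun n => by
    rw [norm_mul, norm_pow, Real.norm_of_nonneg hr0, Real.norm_eq_abs]
    exact mul_le_mul_of_nonneg_left (hw n) (pow_nonneg hr0 n)

theorem tendsto_tsum_exp_mul_div_of_isEquivalent {u v : ℕ → ℝ} {Cu Cv : ℝ}
    (hu : ∀ n, |u n| ≤ Cu) (hv0 : ∀ n, 0 ≤ v n) (hv : ∀ n, v n ≤ Cv)
    (huv : (fun n => ∑ k ∈ range n, u k) ~[atTop] fun n => ∑ k ∈ range n, v k)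
    (hV : Tendsto (fun n => ∑ k ∈ range n, v k) atTop atTop) :
    Tendsto (fun l : ℝ => (∑' n : ℕ, Real.exp (-l * n) * u n) / ∑' n : ℕ, Real.exp (-l * n) * v n)
      (𝓝[>] 0) (𝓝 1) := by
  have hexp : Tendsto (fun l : ℝ => Real.exp (-l)) (𝓝[>] 0) (𝓝[<] 1) := by
    refine tendsto_nhdsWithin_iff.mpr ⟨?_, ?_⟩
    · have : Continuous fun l : ℝ => Real.exp (-l) := by fun_prop
      simpa using (this.tendsto 0).mono_left nhdsWithin_le_nhds
    · filter_upwards [self_mem_nhdsWithin] with l hl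
      exact Real.exp_lt_one_iff.mpr (neg_lt_zero.mpr hl)
  refine ((tendsto_tsum_pow_mul_div_of_isEquivalent hv0
    (fun r h0 h1 => summable_pow_mul_of_abs_le h0 h1 hu)
    (fun r h0 h1 => summable_pow_mul_of_abs_le h0 h1 fun n =>
      (abs_of_nonneg (hv0 n)).trans_le (hv n))
    huv hV).comp hexp).congr fun l => ?_
  simp only [Function.comp_apply, ← Real.exp_nat_mul, mul_comm (-l)]

end Abelian

theorem stmt16_general {X : Type*} [MeasurableSpace X] (μ : Measure X) [SigmaFinite μ]
    (T : X → X) (hc : Conservative T μ)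
    (Phat : (X → ℝ≥0∞) → (X → ℝ≥0∞))
    (hPmeas : ∀ f, Measurable f → Measurable (Phat f))
    (hPdual : ∀ f g : X → ℝ≥0∞, Measurable f → Measurable g →
      ∫⁻ x, f (T x) * g x ∂μ = ∫⁻ x, f x * Phat g x ∂μ)
    (a : ℕ → ℝ) (ha : ∀ n, 0 < a n)
    -- weak pointwise dual ergodicity with constants `a n`
    (hwpde_meas : ∀ f : X → ℝ≥0∞, Measurable f →
      0 < ∫⁻ y, f y ∂μ → ∫⁻ y, f y ∂μ ≠ ⊤ →
      ∀ F : Set X, MeasurableSet F → μ F ≠ ⊤ → ∀ ε : ℝ, 0 < ε →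
        Tendsto (fun n : ℕ => (μ.restrict F)
          {x | ε ≤ |(∑ k ∈ Finset.range n, (Phat^[k]) f x).toReal / a n -
                (∫⁻ y, f y ∂μ).toReal|}) atTop (𝓝 0))
    -- `A` is a limited set
    (A : Set X) (hA : MeasurableSet A) (h0 : 0 < μ A) (hfin : μ A ≠ ⊤)
    (hlim_sup : Tendsto (fun n : ℕ =>
        essSup (fun x => (∑ k ∈ Finset.range n,
            (Phat^[k]) (A.indicator (1 : X → ℝ≥0∞)) x) / ENNReal.ofReal (a n))
          (μ.restrict A)) atTop (𝓝 (μ A))) :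
    Tendsto (fun n : ℕ =>
        a n / (∑ k ∈ Finset.range n, (μ (A ∩ T^[k] ⁻¹' A)).toReal / (μ A).toReal ^ 2))
      atTop (𝓝 1) ∧
    ∀ B : Set X, B ⊆ A → MeasurableSet B → 0 < μ B →
      Tendsto (fun l : ℝ =>
          (∑' n : ℕ, Real.exp (-l * n) * ((μ (A ∩ T^[n] ⁻¹' A)).toReal / (μ A).toReal ^ 2)) /
            (∑' n : ℕ, Real.exp (-l * n) * ((μ (B ∩ T^[n] ⁻¹' B)).toReal / (μ B).toReal ^ 2)))
        (𝓝[>] 0) (𝓝 1) := by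
  have hT := hc.measurable
  have hP : IsTransferOperator_s16 μ T Phat := ⟨hPmeas, hPdual⟩
  have hconv : ∀ B : Set X, B ⊆ A → MeasurableSet B → 0 < μ B →
      TendstoInMeasure (μ.restrict B) (fun n x => (∑ k ∈ Finset.range n,
        (Phat^[k]) (B.indicator 1) x).toReal / a n) atTop fun _ => (μ B).toReal := by
    intro B hBA hB hB0
    have hB1 : ∫⁻ x, B.indicator 1 x ∂μ = μ B := lintegral_indicator_one hB
    have hBfin := measure_ne_top_of_subset hBA hfin
    rw [tendstoInMeasure_iff_dist]
    simpa only [Real.dist_eq, hB1] using hwpde_meas _ (measurable_one.indicator hB)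
      (hB1 ▸ hB0) (hB1 ▸ hBfin) B hB hBfin
  have hsum : ∀ B : Set X, B ⊆ A → MeasurableSet B → 0 < μ B →
      Tendsto (fun n => (∑ k ∈ Finset.range n, normalizedCorrelation μ T B k) / a n) atTop
        (𝓝 1) := fun B hBA hB hB0 =>
    tendsto_sum_normalizedCorrelation_div hP hT hA hB hBA hfin hB0 ha (hconv B hBA hB hB0)
      hlim_sup
  refine ⟨by simpa only [inv_div, inv_one, normalizedCorrelation] using
    (hsum A subset_rfl hA h0).inv₀ one_ne_zero, fun B hBA hB hB0 => ?_⟩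
  exact tendsto_tsum_exp_mul_div_of_isEquivalent
    (fun n => (abs_of_nonneg (normalizedCorrelation_nonneg n)).trans_le
      (normalizedCorrelation_le hfin n))
    normalizedCorrelation_nonneg (normalizedCorrelation_le (measure_ne_top_of_subset hBA hfin))
    ((isEquivalent_of_tendsto_one (hsum A subset_rfl hA h0)).trans
      (isEquivalent_of_tendsto_one (hsum B hBA hB hB0)).symm)
    (tendsto_sum_normalizedCorrelation_atTop hc hB hB0 (measure_ne_top_of_subset hBA hfin))

/-- If `A` is a limited set for a weakly pointwise dual ergodic `T` with return
sequence `a_n`, then `a_n ∼ a_n(A) = ∑_{k<n} m(A ∩ T^{−k}A)/m(A)²`, and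
consequently `u_A(λ) ∼ u_B(λ)` as `λ ↓ 0` for every `B ⊆ A` of positive finite
measure. -/
theorem stmt16 {X : Type*} [MeasurableSpace X] (μ : Measure X) [SigmaFinite μ]
    (T : X → X) (hc : Conservative T μ) (herg : Ergodic T μ)
    (Phat : (X → ℝ≥0∞) → (X → ℝ≥0∞))
    (hPmeas : ∀ f, Measurable f → Measurable (Phat f))
    (hPdual : ∀ f g : X → ℝ≥0∞, Measurable f → Measurable g →
      ∫⁻ x, f (T x) * g x ∂μ = ∫⁻ x, f x * Phat g x ∂μ)
    (a : ℕ → ℝ) (ha : ∀ n, 0 < a n)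
    -- weak pointwise dual ergodicity with constants `a n`
    (hwpde_meas : ∀ f : X → ℝ≥0∞, Measurable f →
      0 < ∫⁻ y, f y ∂μ → ∫⁻ y, f y ∂μ ≠ ⊤ →
      ∀ F : Set X, MeasurableSet F → μ F ≠ ⊤ → ∀ ε : ℝ, 0 < ε →
        Tendsto (fun n : ℕ => (μ.restrict F)
          {x | ε ≤ |(∑ k ∈ Finset.range n, (Phat^[k]) f x).toReal / a n -
                (∫⁻ y, f y ∂μ).toReal|}) atTop (𝓝 0))
    (hwpde_ae : ∀ f : X → ℝ≥0∞, Measurable f →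
      0 < ∫⁻ y, f y ∂μ → ∫⁻ y, f y ∂μ ≠ ⊤ →
      ∀ᵐ x ∂μ, Filter.limsup
          (fun n : ℕ => (∑ k ∈ Finset.range n, (Phat^[k]) f x).toReal / a n) atTop =
        (∫⁻ y, f y ∂μ).toReal)
    -- `A` is a limited set
    (A : Set X) (hA : MeasurableSet A) (h0 : 0 < μ A) (hfin : μ A ≠ ⊤)
    (hlim_meas : ∀ ε : ℝ, 0 < ε →
      Tendsto (fun n : ℕ => (μ.restrict A)
        {x | ε ≤ |(∑ k ∈ Finset.range n,
            (Phat^[k]) (A.indicator (1 : X → ℝ≥0∞)) x).toReal / a n - (μ A).toReal|})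
        atTop (𝓝 0))
    (hlim_sup : Tendsto (fun n : ℕ =>
        essSup (fun x => (∑ k ∈ Finset.range n,
            (Phat^[k]) (A.indicator (1 : X → ℝ≥0∞)) x) / ENNReal.ofReal (a n))
          (μ.restrict A)) atTop (𝓝 (μ A))) :
    Tendsto (fun n : ℕ =>
        a n / (∑ k ∈ Finset.range n, (μ (A ∩ T^[k] ⁻¹' A)).toReal / (μ A).toReal ^ 2))
      atTop (𝓝 1) ∧
    ∀ B : Set X, B ⊆ A → MeasurableSet B → 0 < μ B →
      Tendsto (fun l : ℝ =>
          (∑' n : ℕ, Real.exp (-l * n) * ((μ (A ∩ T^[n] ⁻¹' A)).toReal / (μ A).toReal ^ 2)) /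
            (∑' n : ℕ, Real.exp (-l * n) * ((μ (B ∩ T^[n] ⁻¹' B)).toReal / (μ B).toReal ^ 2)))
        (𝓝[>] 0) (𝓝 1) :=
  stmt16_general μ T hc Phat hPmeas hPdual a ha hwpde_meas A hA h0 hfin hlim_sup
end

section
/- If (a(n)) is regularly varying of positive index γ and (1/a(n)) · n τ(δ₀ a(n)) → 0 for one δ₀ > 0, where τ(n) ↓ 0, then the same holds for all δ > 0; i.e. regular variation upgrades adaptedness at one scale to adaptedness at all scales. -/
/-!
Given `δ < δ₀`, pick `l > 1` with `δ l ^ γ > δ₀`. Regular variation gives `δ a(⌊l n⌋) > δ₀ a(n)`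
for large `n`. For `m` large put `n = ⌊m / l⌋`: then `⌊l n⌋ ≤ m ≤ 2 l n`, so by the monotonicity
of `a` and `τ`,
`m τ(⌊δ a(m)⌋) / a(m) ≤ 2 l · n τ(⌊δ₀ a(n)⌋) / a(n)`, which tends to `0`.
-/

open Filter Topology

lemma exists_one_lt_and_lt_rpow {γ : ℝ} (hγ : 0 < γ) (c : ℝ) : ∃ l : ℝ, 1 < l ∧ c < l ^ γ :=
  ((eventually_gt_atTop 1).and ((tendsto_rpow_atTop hγ).eventually_gt_atTop c)).exists

section FloorDiv

variable {l : ℝ} (m : ℕ)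

lemma floor_mul_floor_div_le (hl : 0 < l) : ⌊l * ⌊(m : ℝ) / l⌋₊⌋₊ ≤ m :=
  Nat.floor_le_of_le <| by
    calc l * ⌊(m : ℝ) / l⌋₊ ≤ l * ((m : ℝ) / l) := by gcongr; exact Nat.floor_le (by positivity)
      _ = m := mul_div_cancel₀ _ hl.ne'

lemma floor_div_le_self (hl : 1 ≤ l) : ⌊(m : ℝ) / l⌋₊ ≤ m :=
  Nat.floor_le_of_le (div_le_self m.cast_nonneg hl)

lemma natCast_le_two_mul_mul_floor_div (hl : 0 < l) (hn : 1 ≤ ⌊(m : ℝ) / l⌋₊) :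
    (m : ℝ) ≤ 2 * l * ⌊(m : ℝ) / l⌋₊ := by
  have hlt : (m : ℝ) < l * (⌊(m : ℝ) / l⌋₊ + 1) := by
    rw [← div_lt_iff₀' hl]; exact Nat.lt_floor_add_one _
  have hn' : (1 : ℝ) ≤ ⌊(m : ℝ) / l⌋₊ := by exact_mod_cast hn
  nlinarith

lemma tendsto_floor_div_atTop (hl : 0 < l) :
    Tendsto (fun m : ℕ => ⌊(m : ℝ) / l⌋₊) atTop atTop :=
  tendsto_nat_floor_atTop.comp (tendsto_natCast_atTop_atTop.atTop_div_const hl)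

end FloorDiv

/-- The quantity `n τ(δ a(n)) / a(n)` whose vanishing at infinity is adaptedness at scale `δ`. -/
noncomputable def adaptedRatio (a : ℕ → ℕ) (τ : ℕ → ℝ) (δ : ℝ) (n : ℕ) : ℝ :=
  n * τ ⌊δ * a n⌋₊ / a n

section AdaptedRatio

variable {a : ℕ → ℕ} {τ : ℕ → ℝ}

lemma adaptedRatio_nonneg (hτ0 : ∀ k, 0 ≤ τ k) (δ : ℝ) (n : ℕ) : 0 ≤ adaptedRatio a τ δ n :=
  div_nonneg (mul_nonneg n.cast_nonneg (hτ0 _)) (a n).cast_nonneg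

lemma adaptedRatio_le_mul (ha : Monotone a) (hτ0 : ∀ k, 0 ≤ τ k) (hτ : Antitone τ)
    {δ δ₀ C : ℝ} {n m : ℕ} (hn : 0 < a n) (hnm : n ≤ m)
    (hscale : δ₀ * a n ≤ δ * a m) (hmC : (m : ℝ) ≤ C * n) :
    adaptedRatio a τ δ m ≤ C * adaptedRatio a τ δ₀ n := by
  have hτle : τ ⌊δ * a m⌋₊ ≤ τ ⌊δ₀ * a n⌋₊ := hτ (Nat.floor_mono hscale)
  have hCn : 0 ≤ C * n := m.cast_nonneg.trans hmC
  have han : (0 : ℝ) < a n := by exact_mod_cast hn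
  have hanm : (a n : ℝ) ≤ a m := by exact_mod_cast ha hnm
  rw [adaptedRatio, adaptedRatio, ← mul_div_assoc, ← mul_assoc]
  exact div_le_div₀ (mul_nonneg hCn (hτ0 _)) (mul_le_mul hmC hτle (hτ0 _) hCn) han hanm

end AdaptedRatio

theorem stmt18_general (γ : ℝ) (hγ : 0 < γ)
    (a : ℕ → ℕ) (hapos : ∀ n, 0 < a n) (hamono : Monotone a)
    (hareg : ∀ l : ℝ, 0 < l →
      Tendsto (fun n : ℕ => (a ⌊l * n⌋₊ : ℝ) / (a n : ℝ)) atTop (𝓝 (l ^ γ)))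
    (τ : ℕ → ℝ) (hτ0 : ∀ n, 0 ≤ τ n) (hτanti : Antitone τ)
    (δ₀ : ℝ)
    (h0 : Tendsto (fun n : ℕ => (n : ℝ) * τ ⌊δ₀ * a n⌋₊ / (a n : ℝ)) atTop (𝓝 0)) :
    ∀ δ : ℝ, 0 < δ →
      Tendsto (fun n : ℕ => (n : ℝ) * τ ⌊δ * a n⌋₊ / (a n : ℝ)) atTop (𝓝 0) := by
  change Tendsto (adaptedRatio a τ δ₀) atTop (𝓝 0) at h0
  intro δ hδ
  obtain ⟨l, hl1, hlγ⟩ := exists_one_lt_and_lt_rpow hγ (δ₀ / δ)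
  have hl : 0 < l := one_pos.trans hl1
  have hscale : ∀ᶠ n : ℕ in atTop, δ₀ * a n < δ * a ⌊l * n⌋₊ :=
    ((hareg l hl).eventually (eventually_gt_nhds hlγ)).mono fun n hn => by
      rwa [div_lt_div_iff₀ hδ (by exact_mod_cast hapos n), mul_comm _ δ] at hn
  have hk := tendsto_floor_div_atTop hl
  refine squeeze_zero' (Eventually.of_forall (adaptedRatio_nonneg hτ0 δ)) ?_
    (by simpa using (h0.comp hk).const_mul (2 * l))
  filter_upwards [hk.eventually (hscale.and (eventually_ge_atTop 1))] with m ⟨hsc, hn1⟩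
  refine adaptedRatio_le_mul hamono hτ0 hτanti (hapos _)
    (floor_div_le_self m hl1.le) (hsc.le.trans ?_) (natCast_le_two_mul_mul_floor_div m hl hn1)
  gcongr
  exact hamono (floor_mul_floor_div_le m hl)

/-- If `a` is regularly varying of index `γ > 0` and `n τ(δ₀ a(n))/a(n) → 0` for one
`δ₀ > 0`, where `τ(n) ↓ 0`, then `n τ(δ a(n))/a(n) → 0` for every `δ > 0`. -/
theorem stmt18 (γ : ℝ) (hγ : 0 < γ)
    (a : ℕ → ℕ) (hapos : ∀ n, 0 < a n) (hamono : Monotone a)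
    (hareg : ∀ l : ℝ, 0 < l →
      Tendsto (fun n : ℕ => (a ⌊l * n⌋₊ : ℝ) / (a n : ℝ)) atTop (𝓝 (l ^ γ)))
    (τ : ℕ → ℝ) (hτ0 : ∀ n, 0 ≤ τ n) (hτanti : Antitone τ)
    (hτlim : Tendsto τ atTop (𝓝 0))
    (δ₀ : ℝ) (hδ₀ : 0 < δ₀)
    (h0 : Tendsto (fun n : ℕ => (n : ℝ) * τ ⌊δ₀ * a n⌋₊ / (a n : ℝ)) atTop (𝓝 0)) :
    ∀ δ : ℝ, 0 < δ →
      Tendsto (fun n : ℕ => (n : ℝ) * τ ⌊δ * a n⌋₊ / (a n : ℝ)) atTop (𝓝 0) :=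
  stmt18_general γ hγ a hapos hamono hareg τ hτ0 hτanti δ₀ h0
end

section
/- Mittag-Leffler/stable duality: if γ ∈ (0,1], Y_γ > 0 a.s. and Z_γ = Y_γ^{−1/γ}, then for regularly varying a of index γ with asymptotic inverse b, and nonnegative random variables with S_n/a(n) → c·Y_γ in distribution (c > 0) together with the duality S_n ≤ j ⟺ φ_j ≥ n, one gets φ_n/b(n) → (1/(c Y_γ))^{1/γ} in distribution. -/
/-!
By duality, `φ n ≤ t b(n)` holds iff `n < S m` with `m = ⌊t b(n)⌋ + 1`, and regular variation of
`a` together with `a(b(n)) ∼ n` gives `n / a(m) → t^(-γ)`. The distribution functions of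
`S m / a(m)` converge pointwise to the continuous distribution function of `c Y`, hence locally
uniformly (they are monotone), so `P(φ n ≤ t b(n)) → P(c Y ≥ t^(-γ)) = P((c Y)^(-1/γ) ≤ t)`,
using that `c Y` has no atoms.
-/

open MeasureTheory Filter Topology ENNReal

section MonotoneFunctions

variable {ι α β : Type*} [LinearOrder α] [TopologicalSpace α] [OrderTopology α] [DenselyOrdered α]
  [NoMinOrder α] [NoMaxOrder α] [LinearOrder β] [TopologicalSpace β] [OrderTopology β]

theorem tendsto_apply_of_monotone_of_continuousAt {L : Filter ι} {F : ι → α → β} {G : α → β}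
    {s : ι → α} {x : α} (hF : ∀ i, Monotone (F i)) (hG : ContinuousAt G x)
    (hFG : ∀ᶠ y in 𝓝 x, Tendsto (fun i => F i y) L (𝓝 (G y))) (hs : Tendsto s L (𝓝 x)) :
    Tendsto (fun i => F i (s i)) L (𝓝 (G x)) := by
  refine tendsto_order.2 ⟨fun y hy => ?_, fun y hy => ?_⟩
  · obtain ⟨z, hzx, hyz, hz⟩ := ((hG.eventually (lt_mem_nhds hy)).and hFG).exists_lt
    filter_upwards [hz.eventually (lt_mem_nhds hyz), hs.eventually (lt_mem_nhds hzx)] with i h1 h2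
    exact h1.trans_le (hF i h2.le)
  · obtain ⟨z, hxz, hzy, hz⟩ := ((hG.eventually (gt_mem_nhds hy)).and hFG).exists_gt
    filter_upwards [hz.eventually (gt_mem_nhds hzy), hs.eventually (gt_mem_nhds hxz)] with i h1 h2
    exact (hF i h2.le).trans_lt h1

end MonotoneFunctions

theorem measure_eq_zero_of_continuous_measureReal_le {Ω : Type*} [MeasurableSpace Ω]
    {P : Measure Ω} [IsProbabilityMeasure P] {X : Ω → ℝ} (hX : Measurable X)
    (hcont : Continuous fun t => P.real {ω | X ω ≤ t}) (u : ℝ) : P {ω | X ω = u} = 0 := by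
  have := Measure.isProbabilityMeasure_map (μ := P) hX.aemeasurable
  have hcdf : ∀ t, ProbabilityTheory.cdf (P.map X) t = P.real {ω | X ω ≤ t} := fun t => by
    rw [ProbabilityTheory.cdf_eq_real, map_measureReal_apply hX measurableSet_Iic]; rfl
  have hleft : Function.leftLim (ProbabilityTheory.cdf (P.map X)) u =
      ProbabilityTheory.cdf (P.map X) u :=
    leftLim_eq_of_tendsto ((((continuous_congr hcdf).2 hcont).tendsto u).mono_left
      nhdsWithin_le_nhds)
  have h := (ProbabilityTheory.cdf (P.map X)).measure_singleton u
  rwa [ProbabilityTheory.measure_cdf, hleft, sub_self, ofReal_zero,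
    Measure.map_apply hX (measurableSet_singleton u)] at h

theorem tendsto_measure_lt_atTop {Ω : Type*} [MeasurableSpace Ω] (P : Measure Ω)
    [IsFiniteMeasure P] {X : Ω → ℕ} (hX : Measurable X) :
    Tendsto (fun n : ℕ => P {ω | n < X ω}) atTop (𝓝 0) := by
  have h := tendsto_measure_iInter_atTop (μ := P)
    (fun n : ℕ => (hX measurableSet_Ioi).nullMeasurableSet)
    (fun m n hmn ω (h : n < X ω) => (hmn.trans_lt h : m < X ω)) ⟨0, measure_ne_top _ _⟩
  rwa [Set.iInter_eq_empty_iff.2 fun ω => ⟨X ω, lt_irrefl (X ω)⟩, measure_empty] at h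

theorem tendsto_atTop_of_monotone_of_tendsto_div {a b : ℕ → ℕ} {r : ℝ} (ha : Monotone a)
    (hr : 0 < r) (hab : Tendsto (fun n : ℕ => (a (b n) : ℝ) / n) atTop (𝓝 r)) :
    Tendsto b atTop atTop := by
  have hab' : Tendsto (fun n : ℕ => (a (b n) : ℝ)) atTop atTop := by
    refine (hab.pos_mul_atTop hr tendsto_natCast_atTop_atTop).congr' ?_
    filter_upwards [eventually_ne_atTop 0] with n hn
    field_simp
  refine tendsto_atTop.2 fun M => (hab'.eventually_gt_atTop (a M)).mono fun n hn => ?_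
  by_contra! hbn
  exact hn.not_ge (by exact_mod_cast ha hbn.le)

theorem tendsto_div_apply_floor_mul_add_one {a b : ℕ → ℕ} {γ t : ℝ} (hapos : ∀ n, 0 < a n)
    (hamono : Monotone a)
    (hareg : ∀ l : ℝ, 0 < l →
      Tendsto (fun n : ℕ => (a ⌊l * n⌋₊ : ℝ) / (a n : ℝ)) atTop (𝓝 (l ^ γ)))
    (hab : Tendsto (fun n : ℕ => (a (b n) : ℝ) / (n : ℝ)) atTop (𝓝 1))
    (hb : Tendsto b atTop atTop) (ht : 0 < t) :
    Tendsto (fun n : ℕ => (a (⌊t * b n⌋₊ + 1) : ℝ) / n) atTop (𝓝 (t ^ γ)) := by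
  have hbR : Tendsto (fun n => (b n : ℝ)) atTop atTop := tendsto_natCast_atTop_atTop.comp hb
  have hlim : ∀ l : ℝ, 0 < l → Tendsto (fun n : ℕ => (a ⌊l * b n⌋₊ : ℝ) / n) atTop (𝓝 (l ^ γ)) := by
    intro l hl
    have h := ((hareg l hl).comp hb).mul hab
    rw [mul_one] at h
    refine h.congr fun n => ?_
    have : (a (b n) : ℝ) ≠ 0 := by exact_mod_cast (hapos (b n)).ne'
    simp only [Function.comp_apply]
    field_simp
  -- `s n → t` is chosen so that `⌊s n * b n⌋₊ = ⌊t * b n⌋₊ + 1`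
  set s : ℕ → ℝ := fun n => (⌊t * b n⌋₊ + 1 : ℝ) / b n
  have hs : Tendsto s atTop (𝓝 t) := by
    have hupper : Tendsto (fun n => t + (b n : ℝ)⁻¹) atTop (𝓝 t) := by
      simpa using tendsto_const_nhds.add hbR.inv_tendsto_atTop
    refine tendsto_of_tendsto_of_tendsto_of_le_of_le' tendsto_const_nhds hupper ?_ ?_ <;>
      filter_upwards [hbR.eventually_gt_atTop 0] with n hn
    · rw [le_div_iff₀ hn]
      exact (Nat.lt_floor_add_one _).le
    · rw [div_le_iff₀ hn, add_mul, inv_mul_cancel₀ hn.ne']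
      gcongr
      exact Nat.floor_le (by positivity)
  have hmono : ∀ n : ℕ, Monotone fun l : ℝ => (a ⌊l * b n⌋₊ : ℝ) / n := fun n l l' hll' => by
    have : a ⌊l * b n⌋₊ ≤ a ⌊l' * b n⌋₊ := hamono (by gcongr)
    dsimp only
    gcongr
  refine (tendsto_apply_of_monotone_of_continuousAt hmono
    (Real.continuousAt_rpow_const t γ (Or.inl ht.ne'))
    (eventually_gt_nhds ht |>.mono hlim) hs).congr' ?_
  filter_upwards [hbR.eventually_gt_atTop 0] with n hn
  simp only [s, div_mul_cancel₀ _ hn.ne']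
  norm_cast
  rw [Nat.floor_natCast]

theorem cast_div_le_iff_lt_apply_floor_add_one {S φ : ℕ → ℕ} (hdual : ∀ n j, S n ≤ j ↔ n ≤ φ j)
    {j b : ℕ} (hb : 0 < b) {t : ℝ} (ht : 0 ≤ t) :
    (φ j : ℝ) / b ≤ t ↔ j < S (⌊t * b⌋₊ + 1) := by
  rw [div_le_iff₀ (by exact_mod_cast hb), ← Nat.le_floor_iff (by positivity), ← not_le, hdual]
  omega

theorem one_div_rpow_one_div_le_iff {x γ t : ℝ} (hx : 0 < x) (hγ : 0 < γ) (ht : 0 < t) :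
    (1 / x) ^ (1 / γ) ≤ t ↔ t ^ (-γ) ≤ x := by
  rw [one_div γ, Real.rpow_inv_le_iff_of_pos (by positivity) ht.le hγ, Real.rpow_neg ht.le,
    one_div, inv_le_comm₀ hx (by positivity)]

theorem measureReal_le_eq_one_sub {Ω : Type*} [MeasurableSpace Ω] {P : Measure Ω}
    [IsProbabilityMeasure P] {X : Ω → ℝ} (hX : Measurable X) {u : ℝ}
    (hu : P {ω | X ω = u} = 0) :
    P.real {ω | u ≤ X ω} = 1 - P.real {ω | X ω ≤ u} := by
  have hdiff : {ω | u ≤ X ω} \ {ω | X ω = u} = {ω | X ω ≤ u}ᶜ := by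
    ext ω
    simp [lt_iff_le_and_ne, eq_comm]
  rw [measureReal_def, ← measure_sdiff_null hu, hdiff, ← measureReal_def,
    probReal_compl_eq_one_sub (measurableSet_le hX measurable_const)]

theorem measureReal_one_div_rpow_le_eq_one_sub {Ω : Type*} [MeasurableSpace Ω] {P : Measure Ω}
    [IsProbabilityMeasure P] {X : Ω → ℝ} (hX : Measurable X) (hXpos : ∀ ω, 0 < X ω)
    (hcont : Continuous fun x => P.real {ω | X ω ≤ x}) {γ t : ℝ} (hγ : 0 < γ) (ht : 0 < t) :
    P.real {ω | (1 / X ω) ^ (1 / γ) ≤ t} = 1 - P.real {ω | X ω ≤ t ^ (-γ)} := by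
  have hset : {ω | (1 / X ω) ^ (1 / γ) ≤ t} = {ω | t ^ (-γ) ≤ X ω} := by
    ext ω
    exact one_div_rpow_one_div_le_iff (hXpos ω) hγ ht
  rw [hset, measureReal_le_eq_one_sub hX (measure_eq_zero_of_continuous_measureReal_le hX hcont _)]

theorem continuous_measureReal_const_mul_le {Ω : Type*} [MeasurableSpace Ω] {P : Measure Ω}
    {X : Ω → ℝ} (hcont : Continuous fun x => P.real {ω | X ω ≤ x}) {c : ℝ} (hc : 0 < c) :
    Continuous fun x => P.real {ω | c * X ω ≤ x} := by
  have hset : ∀ x, {ω | c * X ω ≤ x} = {ω | X ω ≤ x / c} := fun x => by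
    ext ω
    simp only [Set.mem_ofPred_eq, le_div_iff₀ hc, mul_comm]
  simp only [hset]
  exact hcont.comp (continuous_id.div_const c)

section Duality

variable {Ω : Type*} [MeasurableSpace Ω] {P : Measure Ω} [IsProbabilityMeasure P]
  {S φ : ℕ → Ω → ℕ} {a b : ℕ → ℕ}

theorem tendsto_measureReal_div_le_of_nonpos (hdual : ∀ n j ω, S n ω ≤ j ↔ n ≤ φ j ω)
    (hbpos : ∀ n, 0 < b n) (hS : Measurable (S 1)) {t : ℝ} (ht : t ≤ 0) :
    Tendsto (fun n : ℕ => P.real {ω | (φ n ω : ℝ) / b n ≤ t}) atTop (𝓝 0) := by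
  refine tendsto_of_tendsto_of_tendsto_of_le_of_le tendsto_const_nhds
    ((ENNReal.tendsto_toReal zero_ne_top).comp (tendsto_measure_lt_atTop P hS))
    (fun n => measureReal_nonneg) (fun n => measureReal_mono fun ω hω => ?_)
  simpa using (cast_div_le_iff_lt_apply_floor_add_one (hdual · · ω) (hbpos n) le_rfl).1
    (hω.trans ht)

theorem measureReal_div_le_eq_one_sub (hdual : ∀ n j ω, S n ω ≤ j ↔ n ≤ φ j ω)
    (hapos : ∀ n, 0 < a n) (hbpos : ∀ n, 0 < b n) (hS : ∀ n, Measurable (S n)) {t : ℝ}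
    (ht : 0 ≤ t) (n : ℕ) :
    P.real {ω | (φ n ω : ℝ) / b n ≤ t} = 1 - P.real {ω | (S (⌊t * b n⌋₊ + 1) ω : ℝ) /
      a (⌊t * b n⌋₊ + 1) ≤ n / a (⌊t * b n⌋₊ + 1)} := by
  have hSm := hS (⌊t * b n⌋₊ + 1)
  rw [← probReal_compl_eq_one_sub (measurableSet_le (by fun_prop) measurable_const)]
  congr 1
  ext ω
  have ha : (0 : ℝ) < a (⌊t * b n⌋₊ + 1) := by exact_mod_cast hapos _
  simp [cast_div_le_iff_lt_apply_floor_add_one (hdual · · ω) (hbpos n) ht,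
    div_le_div_iff_of_pos_right ha]

end Duality

theorem stmt19_general {Ω : Type*} [MeasurableSpace Ω] (P : Measure Ω) [IsProbabilityMeasure P]
    (γ : ℝ) (hγ0 : 0 < γ) (c : ℝ) (hc : 0 < c)
    (a b : ℕ → ℕ) (hapos : ∀ n, 0 < a n) (hbpos : ∀ n, 0 < b n)
    (hamono : Monotone a)
    (hareg : ∀ l : ℝ, 0 < l →
      Tendsto (fun n : ℕ => (a ⌊l * n⌋₊ : ℝ) / (a n : ℝ)) atTop (𝓝 (l ^ γ)))
    (hab : Tendsto (fun n : ℕ => (a (b n) : ℝ) / (n : ℝ)) atTop (𝓝 1))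
    (S φ : ℕ → Ω → ℕ)
    (hSmeas : ∀ n, Measurable (S n))
    (hdual : ∀ (n j : ℕ) (ω : Ω), S n ω ≤ j ↔ n ≤ φ j ω)
    (Y : Ω → ℝ) (hYmeas : Measurable Y) (hYpos : ∀ ω, 0 < Y ω)
    (hYcont : Continuous fun t : ℝ => (P {ω | Y ω ≤ t}).toReal)
    (hconv : ∀ t : ℝ,
      Tendsto (fun n : ℕ => (P {ω | (S n ω : ℝ) / (a n : ℝ) ≤ t}).toReal) atTop
        (𝓝 ((P {ω | c * Y ω ≤ t}).toReal))) :
    ∀ t : ℝ,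
      Tendsto (fun n : ℕ => (P {ω | (φ n ω : ℝ) / (b n : ℝ) ≤ t}).toReal) atTop
        (𝓝 ((P {ω | (1 / (c * Y ω)) ^ (1 / γ) ≤ t}).toReal)) := by
  intro t
  simp only [← measureReal_def] at hYcont hconv ⊢
  rcases le_or_gt t 0 with ht | ht
  · have hY : {ω | (1 / (c * Y ω)) ^ (1 / γ) ≤ t} = ∅ := Set.eq_empty_of_forall_notMem
      fun ω hω => (hω.trans ht).not_gt (by have := hYpos ω; positivity)
    rw [hY, measureReal_empty]
    exact tendsto_measureReal_div_le_of_nonpos hdual hbpos (hSmeas 1) ht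
  have hb := tendsto_atTop_of_monotone_of_tendsto_div hamono one_pos hab
  set m : ℕ → ℕ := fun n => ⌊t * b n⌋₊ + 1
  have hm : Tendsto m atTop atTop := tendsto_atTop_mono (fun n => Nat.le_add_right _ 1)
    (tendsto_nat_floor_atTop.comp ((tendsto_natCast_atTop_atTop.comp hb).const_mul_atTop ht))
  have hlim : Tendsto (fun n : ℕ => (n : ℝ) / a (m n)) atTop (𝓝 (t ^ (-γ))) := by
    rw [Real.rpow_neg ht.le]
    simpa using (tendsto_div_apply_floor_mul_add_one hapos hamono hareg hab hb ht).inv₀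
      (by positivity)
  have hG := continuous_measureReal_const_mul_le hYcont hc
  have hS : Tendsto (fun n : ℕ => P.real {ω | (S (m n) ω : ℝ) / a (m n) ≤ n / a (m n)}) atTop
      (𝓝 (P.real {ω | c * Y ω ≤ t ^ (-γ)})) :=
    tendsto_apply_of_monotone_of_continuousAt
      (F := fun n x => P.real {ω | (S (m n) ω : ℝ) / a (m n) ≤ x})
      (fun n x y hxy => measureReal_mono fun ω h => le_trans h hxy) hG.continuousAt
      (.of_forall fun x => (hconv x).comp hm) hlim
  rw [measureReal_one_div_rpow_le_eq_one_sub (hYmeas.const_mul c)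
    (fun ω => mul_pos hc (hYpos ω)) hG hγ0 ht]
  simpa only [measureReal_div_le_eq_one_sub hdual hapos hbpos hSmeas ht.le] using
    tendsto_const_nhds.sub hS

/-- Mittag-Leffler/stable duality: if `S_n/a(n) → c·Y_γ` in distribution, where
`Y_γ > 0` has continuous distribution function, `a` is `γ`-regularly varying with
asymptotic inverse `b`, and `S_n ≤ j ⟺ φ_j ≥ n`, then
`φ_n/b(n) → (1/(c Y_γ))^{1/γ}` in distribution. -/
theorem stmt19 {Ω : Type*} [MeasurableSpace Ω] (P : Measure Ω) [IsProbabilityMeasure P]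
    (γ : ℝ) (hγ0 : 0 < γ) (hγ1 : γ ≤ 1) (c : ℝ) (hc : 0 < c)
    (a b : ℕ → ℕ) (hapos : ∀ n, 0 < a n) (hbpos : ∀ n, 0 < b n)
    (hamono : Monotone a)
    (hareg : ∀ l : ℝ, 0 < l →
      Tendsto (fun n : ℕ => (a ⌊l * n⌋₊ : ℝ) / (a n : ℝ)) atTop (𝓝 (l ^ γ)))
    (hba : Tendsto (fun n : ℕ => (b (a n) : ℝ) / (n : ℝ)) atTop (𝓝 1))
    (hab : Tendsto (fun n : ℕ => (a (b n) : ℝ) / (n : ℝ)) atTop (𝓝 1))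
    (S φ : ℕ → Ω → ℕ)
    (hSmeas : ∀ n, Measurable (S n)) (hφmeas : ∀ j, Measurable (φ j))
    (hdual : ∀ (n j : ℕ) (ω : Ω), S n ω ≤ j ↔ n ≤ φ j ω)
    (Y : Ω → ℝ) (hYmeas : Measurable Y) (hYpos : ∀ ω, 0 < Y ω)
    (hYcont : Continuous fun t : ℝ => (P {ω | Y ω ≤ t}).toReal)
    (hconv : ∀ t : ℝ,
      Tendsto (fun n : ℕ => (P {ω | (S n ω : ℝ) / (a n : ℝ) ≤ t}).toReal) atTop
        (𝓝 ((P {ω | c * Y ω ≤ t}).toReal))) :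
    ∀ t : ℝ,
      Tendsto (fun n : ℕ => (P {ω | (φ n ω : ℝ) / (b n : ℝ) ≤ t}).toReal) atTop
        (𝓝 ((P {ω | (1 / (c * Y ω)) ^ (1 / γ) ≤ t}).toReal)) :=
  stmt19_general P γ hγ0 c hc a b hapos hbpos hamono hareg hab S φ hSmeas hdual Y hYmeas hYpos
    hYcont hconv
end
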